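/- arXiv:2602.03832 — 8 statements merged into one kernel-verified Lean document; each statement's English description precedes it below -/
import Mathlib

section
/- Let G be a finite group, H a subgroup of G, H₀ a normal subgroup of H, and g ∈ H. Let g₁, …, g_t be a system of representatives of the H₀-conjugacy classes contained in g^G ∩ H (one representative from each H₀-conjugacy class of elements of H that are G-conjugate to g). Then fix(g,G/H) · [H : H₀] = Σ_{i=1}^t [C_G(g_i) : C_{H₀}(g_i)]. -/
/-!
Count the cosets `xH₀` with `x⁻¹ g x ∈ H` in two ways. Projecting to `G ⧸ H`, they are the
preimage of `fix(g, G/H)`, with fibres of size `[H : H₀]`. Sorting them instead by the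
`H₀`-class of `x⁻¹ g x`, the cosets belonging to the class of `gᵢ = y⁻¹ g y` form the translate
by `y` of the `C_G(gᵢ)`-orbit of the base coset `H₀`, whose stabiliser is `C_{H₀}(gᵢ)`.
-/

section

open MulAction QuotientGroup Subgroup Pointwise Function

variable {G : Type*} [Group G]

lemma QuotientGroup.mk_mem_fixedBy_iff {H : Subgroup G} {g x : G} :
    (x : G ⧸ H) ∈ fixedBy (G ⧸ H) g ↔ x⁻¹ * g * x ∈ H := by
  rw [mem_fixedBy, Quotient.smul_mk, QuotientGroup.eq, ← inv_mem_iff]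
  simp only [smul_eq_mul, mul_inv_rev, inv_inv, mul_assoc]

lemma Subgroup.ncard_preimage_quotientMapOfLE {K H : Subgroup G} (hKH : K ≤ H)
    (S : Set (G ⧸ H)) : (quotientMapOfLE hKH ⁻¹' S).ncard = S.ncard * K.relIndex H := by
  have hfst : ∀ q : G ⧸ K, (quotientMapOfLE hKH q ∈ S ↔ (quotientEquivProdOfLE hKH q).1 ∈ S) :=
    fun q => by induction q using QuotientGroup.induction_on; rfl
  rw [← Nat.card_coe_set_eq, ← Nat.card_coe_set_eq, relIndex, index, ← Nat.card_prod]
  exact Nat.card_congr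
    (((quotientEquivProdOfLE hKH).subtypeEquiv hfst).trans
      Equiv.prodSubtypeFstEquivSubtypeProd)

lemma Subgroup.relIndex_eq_ncard_orbit (K C : Subgroup G) :
    K.relIndex C = (orbit C ((1 : G) : G ⧸ K)).ncard := by
  have hstab : K.subgroupOf C = stabilizer C ((1 : G) : G ⧸ K) := by
    ext c
    change (c : G) ∈ K ↔ (c : G) • ((1 : G) : G ⧸ K) = _
    rw [Quotient.smul_mk, QuotientGroup.eq]
    simp only [smul_eq_mul, mul_one, inv_mem_iff]
  rw [relIndex, hstab, index_stabilizer]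

def conjCosets (K : Subgroup G) (g r : G) : Set (G ⧸ K) :=
  (↑) '' {x : G | ∃ k ∈ K, k * r * k⁻¹ = x⁻¹ * g * x}

lemma conjCosets_eq_smul_orbit {K : Subgroup G} {g r y : G} (hy : y⁻¹ * g * y = r) :
    conjCosets K g r = y • orbit (centralizer {r}) ((1 : G) : G ⧸ K) := by
  ext q
  constructor
  · rintro ⟨x, ⟨k, hk, hkx⟩, rfl⟩
    have hxk : x * k * r = g * (x * k) :=
      calc x * k * r = x * (k * r * k⁻¹) * k := by group
        _ = g * (x * k) := by rw [hkx]; group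
    have hc : y⁻¹ * x * k ∈ centralizer {r} := by
      rw [mem_centralizer_singleton_iff]
      calc y⁻¹ * x * k * r = y⁻¹ * (x * k * r) := by group
        _ = r * (y⁻¹ * x * k) := by rw [hxk, ← hy]; group
    refine ⟨_, ⟨⟨_, hc⟩, rfl⟩, ?_⟩
    change ((y * ((y⁻¹ * x * k) * 1) : G) : G ⧸ K) = x
    rw [mul_one, ← mul_assoc, mul_inv_cancel_left]
    exact mk_mul_of_mem x hk
  · rintro ⟨_, ⟨⟨c, hc⟩, rfl⟩, rfl⟩
    rw [mem_centralizer_singleton_iff] at hc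
    refine ⟨y * c, ⟨1, K.one_mem, ?_⟩, ?_⟩
    · calc 1 * r * 1⁻¹ = c⁻¹ * (c * r) := by group
        _ = c⁻¹ * (r * c) := by rw [hc]
        _ = (y * c)⁻¹ * g * (y * c) := by rw [← hy]; group
    · change _ = ((y * (c * 1) : G) : G ⧸ K)
      rw [mul_one]

lemma ncard_conjCosets {K : Subgroup G} {g r : G} (h : IsConj g r) :
    (conjCosets K g r).ncard = K.relIndex (centralizer {r}) := by
  obtain ⟨c, hc⟩ := isConj_iff.mp h
  rw [conjCosets_eq_smul_orbit (y := c⁻¹) (by rwa [inv_inv]), Set.ncard_smul_set,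
    relIndex_eq_ncard_orbit]

lemma exists_conj_of_mem_conjCosets {K : Subgroup G} {g r r' : G} {q : G ⧸ K}
    (hr : q ∈ conjCosets K g r) (hr' : q ∈ conjCosets K g r') :
    ∃ k ∈ K, k * r * k⁻¹ = r' := by
  obtain ⟨x, ⟨k, hk, hkx⟩, rfl⟩ := hr
  obtain ⟨x', ⟨k', hk', hkx'⟩, hxx'⟩ := hr'
  have hx'x : x'⁻¹ * x ∈ K := QuotientGroup.eq.mp hxx'
  refine ⟨k'⁻¹ * (x'⁻¹ * x) * k, mul_mem (mul_mem (inv_mem hk') hx'x) hk, ?_⟩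
  calc k'⁻¹ * (x'⁻¹ * x) * k * r * (k'⁻¹ * (x'⁻¹ * x) * k)⁻¹
      = k'⁻¹ * x'⁻¹ * (x * (k * r * k⁻¹) * x⁻¹) * x' * k' := by group
    _ = k'⁻¹ * (x'⁻¹ * g * x') * k' := by rw [hkx]; group
    _ = r' := by rw [← hkx']; group

lemma pairwise_disjoint_conjCosets {ι : Type*} {K : Subgroup G} {g : G} {r : ι → G}
    (hdistinct : ∀ i j, i ≠ j → ¬ ∃ k ∈ K, k * r i * k⁻¹ = r j) :
    Pairwise (Disjoint on fun i => conjCosets K g (r i)) :=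
  fun i j hij => Set.disjoint_left.mpr fun _ hi hj =>
    hdistinct i j hij (exists_conj_of_mem_conjCosets hi hj)

lemma preimage_fixedBy_eq_iUnion_conjCosets {ι : Type*} {K H : Subgroup G} (hKH : K ≤ H)
    {g : G} {r : ι → G} (hrH : ∀ i, r i ∈ H)
    (hcover : ∀ x ∈ H, IsConj g x → ∃ i, ∃ k ∈ K, k * r i * k⁻¹ = x) :
    quotientMapOfLE hKH ⁻¹' fixedBy (G ⧸ H) g = ⋃ i, conjCosets K g (r i) := by
  ext q
  rw [Set.mem_preimage, Set.mem_iUnion]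
  constructor
  · induction q using QuotientGroup.induction_on with | H x => ?_
    rw [quotientMapOfLE_apply_mk, mk_mem_fixedBy_iff]
    intro hx
    obtain ⟨i, k, hk, hkx⟩ := hcover _ hx (isConj_iff.mpr ⟨x⁻¹, by group⟩)
    exact ⟨i, x, ⟨k, hk, hkx⟩, rfl⟩
  · rintro ⟨i, x, ⟨k, hk, hkx⟩, rfl⟩
    rw [quotientMapOfLE_apply_mk, mk_mem_fixedBy_iff, ← hkx]
    exact mul_mem (mul_mem (hKH hk) (hrH i)) (inv_mem (hKH hk))

end

theorem fix_mul_index_eq_sum_relindex_general {G : Type*} [Group G] [Finite G]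
    (H H₀ : Subgroup G) (hle : H₀ ≤ H)
    (g : G) (t : ℕ) (r : Fin t → G)
    (hrH : ∀ i, r i ∈ H)
    (hrconj : ∀ i, IsConj g (r i))
    (hdistinct : ∀ i j : Fin t, i ≠ j → ¬ ∃ h ∈ H₀, h * r i * h⁻¹ = r j)
    (hcover : ∀ x ∈ H, IsConj g x → ∃ i : Fin t, ∃ h ∈ H₀, h * r i * h⁻¹ = x) :
    Nat.card (MulAction.fixedBy (G ⧸ H) g) * Subgroup.relIndex H₀ H =
      ∑ i : Fin t, Subgroup.relIndex H₀ (Subgroup.centralizer {r i}) := by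
  rw [Nat.card_coe_set_eq, ← Subgroup.ncard_preimage_quotientMapOfLE hle,
    preimage_fixedBy_eq_iUnion_conjCosets hle hrH hcover,
    Set.ncard_iUnion_of_finite (fun _ => Set.toFinite _) (pairwise_disjoint_conjCosets hdistinct),
    finsum_eq_sum_of_fintype]
  exact Finset.sum_congr rfl fun i _ => ncard_conjCosets (hrconj i)

/-- Lemma 1.2(i): if `H₀ ⊴ H ≤ G`, `g ∈ H`, and `g₁, …, g_t` are representatives of the
`H₀`-conjugacy classes contained in `g^G ∩ H`, then
`fix(g, G/H) · [H : H₀] = ∑ᵢ [C_G(gᵢ) : C_{H₀}(gᵢ)]`. -/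
theorem fix_mul_index_eq_sum_relindex {G : Type*} [Group G] [Finite G]
    (H H₀ : Subgroup G) (hle : H₀ ≤ H) (hnorm : (H₀.subgroupOf H).Normal)
    (g : G) (hg : g ∈ H) (t : ℕ) (r : Fin t → G)
    (hrH : ∀ i, r i ∈ H)
    (hrconj : ∀ i, IsConj g (r i))
    (hdistinct : ∀ i j : Fin t, i ≠ j → ¬ ∃ h ∈ H₀, h * r i * h⁻¹ = r j)
    (hcover : ∀ x ∈ H, IsConj g x → ∃ i : Fin t, ∃ h ∈ H₀, h * r i * h⁻¹ = x) :
    Nat.card (MulAction.fixedBy (G ⧸ H) g) * Subgroup.relIndex H₀ H =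
      ∑ i : Fin t, Subgroup.relIndex H₀ (Subgroup.centralizer {r i}) :=
  fix_mul_index_eq_sum_relindex_general H H₀ hle g t r hrH hrconj hdistinct hcover
end

section
/- Let p be a prime, K the algebraic closure of 𝔽_p, and V an n-dimensional K-vector space with n ≥ 1. Let x and y be invertible linear endomorphisms of V such that the subgroup ⟨x,y⟩ of GL(V) acts irreducibly on V (the only ⟨x,y⟩-invariant subspaces of V are 0 and V) and ⟨x,y⟩ ≠ 1. Then there exists z ∈ {x, y, xy} such that 3·dim ker(z − 1) ≤ n, i.e. the fixed-point subspace C_V(z) has dimension at most n/3. -/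
/-!
For endomorphisms `X, Y` of `V`, consider `E : V × V → V`, `(u, v) ↦ (X - 1) u + X (Y - 1) v`.
Its range contains `[V, X] + [V, Y]`, where `[V, X] = (X - 1) V`; the difference map
`(u, v) ↦ u - v` sends `ker E` onto a space containing `C_V(X) + C_V(Y)`, and its kernel on
`ker E` contains the diagonal copy of `C_V(XY)`. Counting dimensions gives Scott's inequality

  `dim C_V(X) + dim C_V(Y) + dim C_V(XY) + dim ([V, X] + [V, Y])`
  `  ≤ 2 dim V + dim (C_V(X) ∩ C_V(Y))`.

Both `[V, X] + [V, Y]` and `C_V(X) ∩ C_V(Y)` are `⟨X, Y⟩`-invariant, so for an irreducible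
nontrivial group they are `V` and `0`, and the three fixed spaces have total dimension at most `n`.
-/

open Module LinearMap

section Scott

variable {K V U : Type*} [Field K] [AddCommGroup V] [Module K V] [AddCommGroup U] [Module K U]

theorem Submodule.finrank_map_add_finrank_inf_ker (f : V →ₗ[K] U) (D : Submodule K V)
    [FiniteDimensional K D] : finrank K (D.map f) + finrank K ↥(D ⊓ ker f) = finrank K D := by
  rw [← range_domRestrict, ← Submodule.map_comap_subtype, Submodule.finrank_map_subtype_eq,
    ← ker_domRestrict]
  exact finrank_range_add_finrank_ker _

theorem Module.End.mem_ker_sub_one {f : End K V} {v : V} : v ∈ ker (f - 1) ↔ f v = v := by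
  rw [mem_ker, LinearMap.sub_apply, Module.End.one_apply, sub_eq_zero]

variable (X Y : End K V)

def scottMap : V × V →ₗ[K] V := (X - 1).coprod (X * (Y - 1))

theorem scottMap_apply (u v : V) : scottMap X Y (u, v) = X u - u + X (Y v - v) := by
  simp only [scottMap, coprod_apply, LinearMap.sub_apply, Module.End.mul_apply,
    Module.End.one_apply]

theorem sup_range_sub_one_le_range_scottMap :
    range (X - 1) ⊔ range (Y - 1) ≤ range (scottMap X Y) := by
  rw [sup_le_iff]
  constructor
  · rintro _ ⟨u, rfl⟩
    exact ⟨(u, 0), by simp [scottMap_apply]⟩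
  · rintro _ ⟨v, rfl⟩
    refine ⟨(-(Y v - v), v), ?_⟩
    simp only [scottMap_apply, map_neg, map_sub, LinearMap.sub_apply, Module.End.one_apply]
    abel

theorem sup_ker_sub_one_le_map_ker_scottMap :
    ker (X - 1) ⊔ ker (Y - 1) ≤ (ker (scottMap X Y)).map (fst K V V - snd K V V) := by
  rw [sup_le_iff]
  constructor
  · intro u hu
    rw [Module.End.mem_ker_sub_one] at hu
    exact ⟨(u, 0), by simp [scottMap_apply, hu], by simp⟩
  · intro v hv
    rw [Module.End.mem_ker_sub_one] at hv
    exact ⟨(0, -v), by simp [scottMap_apply, hv], by simp⟩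

theorem map_diag_ker_mul_sub_one_le :
    (ker (X * Y - 1)).map (LinearMap.id.prod LinearMap.id) ≤
      ker (scottMap X Y) ⊓ ker (fst K V V - snd K V V) := by
  rintro _ ⟨u, hu, rfl⟩
  rw [SetLike.mem_coe, Module.End.mem_ker_sub_one, Module.End.mul_apply] at hu
  refine ⟨?_, by simp⟩
  change scottMap X Y (u, u) = 0
  rw [scottMap_apply, map_sub, hu]
  abel

variable [FiniteDimensional K V]

theorem scott_inequality :
    finrank K (ker (X - 1)) + finrank K (ker (Y - 1)) + finrank K (ker (X * Y - 1)) +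
        finrank K ↥(range (X - 1) ⊔ range (Y - 1)) ≤
      2 * finrank K V + finrank K ↥(ker (X - 1) ⊓ ker (Y - 1)) := by
  have hE := finrank_range_add_finrank_ker (scottMap X Y)
  have hπ := Submodule.finrank_map_add_finrank_inf_ker (fst K V V - snd K V V) (ker (scottMap X Y))
  have hsup := Submodule.finrank_sup_add_finrank_inf_eq (ker (X - 1)) (ker (Y - 1))
  have h₁ := Submodule.finrank_mono (sup_range_sub_one_le_range_scottMap X Y)
  have h₂ := Submodule.finrank_mono (sup_ker_sub_one_le_map_ker_scottMap X Y)
  have h₃ := Submodule.finrank_mono (map_diag_ker_mul_sub_one_le X Y)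
  have hinj : Function.Injective (LinearMap.id.prod LinearMap.id : V →ₗ[K] V × V) :=
    fun u v h => congrArg Prod.fst h
  rw [← (Submodule.equivMapOfInjective _ hinj _).finrank_eq] at h₃
  rw [finrank_prod] at hE
  omega

end Scott

section Invariance

variable {K V : Type*} [Field K] [AddCommGroup V] [Module K V]

theorem Module.End.apply_mem_of_range_sub_one_le {f : End K V} {W : Submodule K V}
    (h : range (f - 1) ≤ W) {v : V} (hv : v ∈ W) : f v ∈ W := by
  have hf : f v = (f - 1) v + v := by simp
  exact hf ▸ W.add_mem (h (mem_range_self _ v)) hv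

theorem Module.End.apply_mem_of_le_ker_sub_one {f : End K V} {W : Submodule K V}
    (h : W ≤ ker (f - 1)) {v : V} (hv : v ∈ W) : f v ∈ W :=
  (Module.End.mem_ker_sub_one.mp (h hv)).symm ▸ hv

variable [FiniteDimensional K V]

theorem LinearMap.GeneralLinearGroup.map_eq_of_map_le (g : GeneralLinearGroup K V)
    {W : Submodule K V} (h : W.map (g : End K V) ≤ W) : W.map (g : End K V) = W :=
  Submodule.eq_of_le_of_finrank_le h ((toLinearEquiv g).finrank_map_eq W).ge

theorem LinearMap.GeneralLinearGroup.apply_mem_of_mem_closure {s : Set (GeneralLinearGroup K V)}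
    {W : Submodule K V} (hs : ∀ g ∈ s, ∀ v ∈ W, (g : End K V) v ∈ W)
    {g : GeneralLinearGroup K V} (hg : g ∈ Subgroup.closure s) :
    ∀ v ∈ W, (g : End K V) v ∈ W := by
  suffices W.map (g : End K V) = W from fun v hv => this ▸ Submodule.mem_map_of_mem hv
  induction hg using Subgroup.closure_induction with
  | mem g hg => exact map_eq_of_map_le g (Submodule.map_le_iff_le_comap.mpr (hs g hg))
  | one => exact Submodule.map_id W
  | mul a b _ _ ha hb => rw [Units.val_mul, Module.End.mul_eq_comp, Submodule.map_comp, hb, ha]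
  | inv a _ ha =>
    conv_lhs => rw [← ha, ← Submodule.map_comp, ← Module.End.mul_eq_comp, ← Units.val_mul,
      inv_mul_cancel, Units.val_one]
    exact Submodule.map_id W

end Invariance

theorem scott_lemma_consequence_general (p : ℕ) [Fact p.Prime] (n : ℕ)
    (V : Type*) [AddCommGroup V] [Module (AlgebraicClosure (ZMod p)) V]
    [FiniteDimensional (AlgebraicClosure (ZMod p)) V]
    (hdim : Module.finrank (AlgebraicClosure (ZMod p)) V = n)
    (x y : LinearMap.GeneralLinearGroup (AlgebraicClosure (ZMod p)) V)
    (hirr : ∀ W : Submodule (AlgebraicClosure (ZMod p)) V,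
      (∀ g ∈ Subgroup.closure ({x, y} :
          Set (LinearMap.GeneralLinearGroup (AlgebraicClosure (ZMod p)) V)),
        ∀ v ∈ W, (g : Module.End (AlgebraicClosure (ZMod p)) V) v ∈ W) →
      W = ⊥ ∨ W = ⊤)
    (hne : Subgroup.closure ({x, y} :
        Set (LinearMap.GeneralLinearGroup (AlgebraicClosure (ZMod p)) V)) ≠ ⊥) :
    ∃ z ∈ ({x, y, x * y} :
        Set (LinearMap.GeneralLinearGroup (AlgebraicClosure (ZMod p)) V)),
      3 * Module.finrank (AlgebraicClosure (ZMod p))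
          (LinearMap.ker ((z : Module.End (AlgebraicClosure (ZMod p)) V) - 1)) ≤ n := by
  set K := AlgebraicClosure (ZMod p)
  have hxy : ¬((x : End K V) = 1 ∧ (y : End K V) = 1) := fun ⟨hx, hy⟩ =>
    hne <| (Subgroup.closure_eq_bot_iff).mpr <| by
      rintro g (rfl | rfl) <;> exact Units.ext ‹_›
  have hrange : range ((x : End K V) - 1) ⊔ range ((y : End K V) - 1) = ⊤ := by
    refine (hirr _ fun g hg => GeneralLinearGroup.apply_mem_of_mem_closure ?_ hg).resolve_left ?_
    · rintro g (rfl | rfl) v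
      exacts [Module.End.apply_mem_of_range_sub_one_le le_sup_left,
        Module.End.apply_mem_of_range_sub_one_le le_sup_right]
    · simpa [range_eq_bot, sub_eq_zero] using hxy
  have hker : ker ((x : End K V) - 1) ⊓ ker ((y : End K V) - 1) = ⊥ := by
    refine (hirr _ fun g hg => GeneralLinearGroup.apply_mem_of_mem_closure ?_ hg).resolve_right ?_
    · rintro g (rfl | rfl) v
      exacts [Module.End.apply_mem_of_le_ker_sub_one inf_le_left,
        Module.End.apply_mem_of_le_ker_sub_one inf_le_right]
    · simpa [ker_eq_top, sub_eq_zero] using hxy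
  have hscott := scott_inequality (x : End K V) y
  rw [hrange, hker, finrank_top, finrank_bot, hdim] at hscott
  by_contra! h
  simp only [Set.mem_insert_iff, Set.mem_singleton_iff, forall_eq_or_imp, forall_eq,
    Units.val_mul] at h
  omega

/-- Lemma 5.4 (consequence of Scott's lemma): if `x, y` generate an irreducible nontrivial
subgroup of `GL(V)` where `V` is an `n`-dimensional vector space over `K = 𝔽̄_p`, then one
of `x`, `y`, `xy` has fixed-point space of dimension at most `n/3`. -/
theorem scott_lemma_consequence (p : ℕ) [Fact p.Prime] (n : ℕ) (hn : 1 ≤ n)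
    (V : Type*) [AddCommGroup V] [Module (AlgebraicClosure (ZMod p)) V]
    [FiniteDimensional (AlgebraicClosure (ZMod p)) V]
    (hdim : Module.finrank (AlgebraicClosure (ZMod p)) V = n)
    (x y : LinearMap.GeneralLinearGroup (AlgebraicClosure (ZMod p)) V)
    (hirr : ∀ W : Submodule (AlgebraicClosure (ZMod p)) V,
      (∀ g ∈ Subgroup.closure ({x, y} :
          Set (LinearMap.GeneralLinearGroup (AlgebraicClosure (ZMod p)) V)),
        ∀ v ∈ W, (g : Module.End (AlgebraicClosure (ZMod p)) V) v ∈ W) →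
      W = ⊥ ∨ W = ⊤)
    (hne : Subgroup.closure ({x, y} :
        Set (LinearMap.GeneralLinearGroup (AlgebraicClosure (ZMod p)) V)) ≠ ⊥) :
    ∃ z ∈ ({x, y, x * y} :
        Set (LinearMap.GeneralLinearGroup (AlgebraicClosure (ZMod p)) V)),
      3 * Module.finrank (AlgebraicClosure (ZMod p))
          (LinearMap.ker ((z : Module.End (AlgebraicClosure (ZMod p)) V) - 1)) ≤ n :=
  scott_lemma_consequence_general p n V hdim x y hirr hne
end

section
/- Let n and B be positive integers with B < n, let A be a real number with 1 ≤ A < n, and assume A + B ≤ n. Let 𝒜 ⊆ ℝⁿ be the set of tuples a = (a₁, …, a_n) such that: for every i, a_i = 0 or a_i ≥ 1; a₁ ≤ A; Σ_{i=1}^n a_i = n; and for each i ≥ 2, either a_i = 0 or the number of indices t ≥ 2 with a_t = a_i is at least B. For a ∈ 𝒜 let R(a) be the number of indices i ≥ 2 with a_i ≠ 0. Then the maximum over a ∈ 𝒜 of R(a) + Σ_{i=1}^n a_i² is attained and equals B + A² + (n−A)²/B if A(B+1) ≥ 2n, and equals B + n²/B if A(B+1) ≤ 2n. -/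
/-!
Let `a ∈ 𝒜` and `x = a₁ ∈ [0, A]`. The nonzero entries `aᵢ` with `i ≥ 2` are at least `1`, sum
to `S = n - x`, and each of their values occurs at least `B` times, so `B aᵢ ≤ S`. Summing
`(aᵢ - 1)(S - B aᵢ) ≥ 0` gives `R(a) + ∑_{i ≥ 2} aᵢ² ≤ B + S² / B`, i.e.
`R(a) + ∑ aᵢ² ≤ f(x) := B + x² + (n - x)² / B`. The quadratic `f` is convex, so on `[0, A]` it
peaks at `A` or at `0`, according to the sign of `f(A) - f(0) = A (A (B + 1) - 2n) / B`; and
`f(x)` is attained by `a₁ = x` followed by `B` entries equal to `(n - x) / B`.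
-/

open Finset

section
variable {ι : Type*}

theorem mul_le_sum_of_le_card_filter_eq {s : Finset ι} {a : ι → ℝ} {B : ℕ}
    (hnn : ∀ i ∈ s, 0 ≤ a i) {i : ι} (hi : i ∈ s) (hB : B ≤ #{j ∈ s | a j = a i}) :
    B * a i ≤ ∑ j ∈ s, a j :=
  calc B * a i ≤ #{j ∈ s | a j = a i} * a i := by
        gcongr
        exact hnn i hi
    _ = ∑ j ∈ s with a j = a i, a j := by
        rw [sum_congr rfl fun j hj => (mem_filter.1 hj).2, sum_const, nsmul_eq_mul]
    _ ≤ ∑ j ∈ s, a j := sum_le_sum_of_subset_of_nonneg (filter_subset _ _) fun j hj _ => hnn j hj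

theorem sum_sq_add_card_le {s : Finset ι} {a : ι → ℝ} {B : ℕ} (hB : 0 < B)
    (h1 : ∀ i ∈ s, 1 ≤ a i) (hmult : ∀ i ∈ s, B ≤ #{j ∈ s | a j = a i}) :
    ∑ i ∈ s, a i ^ 2 + #s ≤ (∑ i ∈ s, a i) ^ 2 / B + B := by
  rcases s.eq_empty_or_nonempty with rfl | ⟨i, hi⟩
  · simp
  set S := ∑ i ∈ s, a i
  have hBs : (B : ℝ) ≤ #s := by exact_mod_cast (hmult i hi).trans (card_filter_le _ _)
  have hsS : (#s : ℝ) ≤ S := by simpa using card_nsmul_le_sum s a 1 h1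
  have hterm : ∀ i ∈ s, (B : ℝ) * a i ^ 2 ≤ (S + B) * a i - S := by
    intro i hi
    have hBa : (B : ℝ) * a i ≤ S :=
      mul_le_sum_of_le_card_filter_eq (fun j hj => zero_le_one.trans (h1 j hj)) hi (hmult i hi)
    nlinarith [mul_nonneg (sub_nonneg.2 (h1 i hi)) (sub_nonneg.2 hBa)]
  have hsum : (B : ℝ) * ∑ i ∈ s, a i ^ 2 ≤ (S + B) * S - #s * S := by
    have := sum_le_sum hterm
    rwa [← mul_sum, sum_sub_distrib, ← mul_sum, sum_const, nsmul_eq_mul] at this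
  have hBpos : (0 : ℝ) < B := by exact_mod_cast hB
  rw [div_add' _ _ _ hBpos.ne', le_div_iff₀ hBpos]
  nlinarith [mul_nonneg (sub_nonneg.2 hBs) (sub_nonneg.2 (hBs.trans hsS))]

end

section
variable {ι : Type*} [Fintype ι] [DecidableEq ι]

/-- `R(a)` of the paper counts this set, with `i₀` playing the role of the index `1`. -/
noncomputable def restSupport (i₀ : ι) (a : ι → ℝ) : Finset ι := {i | i ≠ i₀ ∧ a i ≠ 0}

theorem sum_comp_eq_add_sum_restSupport (i₀ : ι) (a : ι → ℝ) {φ : ℝ → ℝ}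
    (hφ : φ 0 = 0) : ∑ i, φ (a i) = φ (a i₀) + ∑ i ∈ restSupport i₀ a, φ (a i) := by
  rw [← add_sum_erase _ _ (mem_univ i₀)]
  have : restSupport i₀ a = {i ∈ univ.erase i₀ | a i ≠ 0} := by
    ext i; simp [restSupport, and_comm]
  rw [this, sum_filter_of_ne]
  intro i _ h ha
  exact h (by rw [ha, hφ])

theorem sum_eq_add_sum_restSupport (i₀ : ι) (a : ι → ℝ) :
    ∑ i, a i = a i₀ + ∑ i ∈ restSupport i₀ a, a i :=
  sum_comp_eq_add_sum_restSupport i₀ a (φ := id) rfl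

end

/-- The set `𝒜`, with `a₁` at index `0`. -/
def admissible (n B : ℕ) (A : ℝ) : Set (Fin n → ℝ) :=
  {a | (∀ i, a i = 0 ∨ 1 ≤ a i) ∧
    (∀ i : Fin n, (i : ℕ) = 0 → a i ≤ A) ∧
    (∑ i, a i) = n ∧
    (∀ i : Fin n, (i : ℕ) ≠ 0 →
      (a i = 0 ∨ B ≤ {t : Fin n | (t : ℕ) ≠ 0 ∧ a t = a i}.ncard))}

noncomputable def objective {n : ℕ} (a : Fin n → ℝ) : ℝ :=
  ({i : Fin n | (i : ℕ) ≠ 0 ∧ a i ≠ 0}.ncard : ℝ) + ∑ i, a i ^ 2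

noncomputable def bound (n B : ℕ) (x : ℝ) : ℝ := B + x ^ 2 + (n - x) ^ 2 / B

section
variable {n : ℕ} [NeZero n]

theorem ncard_val_ne_zero_and (p : Fin n → Prop) [DecidablePred p] :
    {i : Fin n | (i : ℕ) ≠ 0 ∧ p i}.ncard = #{i | i ≠ 0 ∧ p i} := by
  rw [← Set.ncard_coe_finset]
  simp [Fin.val_eq_zero_iff]

theorem objective_eq (a : Fin n → ℝ) :
    objective a = #(restSupport 0 a) + a 0 ^ 2 + ∑ i ∈ restSupport 0 a, a i ^ 2 := by
  rw [objective, ncard_val_ne_zero_and, sum_comp_eq_add_sum_restSupport 0 a (φ := (· ^ 2))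
    (by norm_num), add_assoc]
  rfl

theorem multiplicity_condition_iff (a : Fin n → ℝ) (B : ℕ) :
    (∀ i : Fin n, (i : ℕ) ≠ 0 →
      (a i = 0 ∨ B ≤ {t : Fin n | (t : ℕ) ≠ 0 ∧ a t = a i}.ncard)) ↔
    ∀ i ∈ restSupport 0 a, B ≤ #{j ∈ restSupport 0 a | a j = a i} := by
  simp only [ncard_val_ne_zero_and]
  simp only [restSupport, mem_filter, mem_univ, true_and, and_imp, ne_eq, Fin.val_eq_zero_iff,
    filter_filter]
  refine forall_congr' fun i => forall_congr' fun hi => ?_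
  by_cases hai : a i = 0
  · simp [hai]
  · have : ∀ j, (¬j = 0 ∧ ¬a j = 0) ∧ a j = a i ↔ ¬j = 0 ∧ a j = a i := fun j =>
      ⟨fun h => ⟨h.1.1, h.2⟩, fun h => ⟨⟨h.1, h.2 ▸ hai⟩, h.2⟩⟩
    simp [hai, this]

theorem objective_le_bound {B : ℕ} (hB : 0 < B) {A : ℝ} {a : Fin n → ℝ}
    (ha : a ∈ admissible n B A) : objective a ≤ bound n B (a 0) := by
  obtain ⟨h01, -, hsum, hmult⟩ := ha
  have h1 : ∀ i ∈ restSupport 0 a, 1 ≤ a i := fun i hi =>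
    (h01 i).resolve_left (mem_filter.1 hi).2.2
  have hrest : ∑ i ∈ restSupport 0 a, a i = n - a 0 := by
    linarith [sum_eq_add_sum_restSupport 0 a]
  have := sum_sq_add_card_le hB h1 ((multiplicity_condition_iff a B).1 hmult)
  rw [objective_eq, bound, ← hrest]
  linarith

theorem exists_mem_admissible_objective_eq {B : ℕ} (hB : 0 < B) (hBn : B < n) {A c : ℝ}
    (hc : c = 0 ∨ 1 ≤ c) (hcA : c ≤ A) (hcn : c + B ≤ n) :
    ∃ a ∈ admissible n B A, objective a = bound n B c := by
  have hBpos : (0 : ℝ) < B := by exact_mod_cast hB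
  set v := (n - c) / B
  have hv : 1 ≤ v := by rw [le_div_iff₀ hBpos]; linarith
  have hv0 : v ≠ 0 := by positivity
  set T : Finset (Fin n) := Ioc 0 ⟨B, hBn⟩
  have hT : #T = B := by simp [T]
  have hT0 : ∀ i ∈ T, i ≠ 0 := fun i hi => (mem_Ioc.1 hi).1.ne'
  set a : Fin n → ℝ := fun i => if i = 0 then c else if i ∈ T then v else 0
  have haT : ∀ i ∈ T, a i = v := fun i hi => by simp [a, hT0 i hi, hi]
  have hsupp : restSupport 0 a = T := by
    ext i
    by_cases hi : i ∈ T
    · simp [restSupport, a, hi, hT0 i hi, hv0]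
    · simp +contextual [restSupport, a, hi]
  have hsumT : ∀ φ : ℝ → ℝ, ∑ i ∈ T, φ (a i) = B * φ v := fun φ => by
    rw [sum_congr rfl fun i hi => by rw [haT i hi], sum_const, hT, nsmul_eq_mul]
  refine ⟨a, ⟨fun i => ?_, fun i hi => ?_, ?_, ?_⟩, ?_⟩
  · simp only [a]
    split_ifs
    exacts [hc, Or.inr hv, Or.inl rfl]
  · simp [a, Fin.val_eq_zero_iff.1 hi, hcA]
  · rw [sum_eq_add_sum_restSupport 0 a, hsupp, show ∑ i ∈ T, a i = B * v from hsumT id]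
    simp only [↓reduceIte, a, v]
    field_simp
    ring
  · rw [multiplicity_condition_iff, hsupp]
    intro i hi
    rw [filter_true_of_mem fun j hj => by rw [haT j hj, haT i hi], hT]
  · rw [objective_eq, hsupp, hsumT (· ^ 2), hT, bound]
    simp only [↓reduceIte, a, v]
    field_simp

end

theorem bound_le_bound_right {n B : ℕ} (hB : 0 < B) {A x : ℝ} (hx : 0 ≤ x) (hxA : x ≤ A)
    (h : 2 * (n : ℝ) ≤ A * (B + 1)) : bound n B x ≤ bound n B A := by
  have hBpos : (0 : ℝ) < B := by exact_mod_cast hB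
  have : bound n B A - bound n B x = (A - x) * ((A + x) * (B + 1) - 2 * n) / B := by
    simp only [bound]
    field_simp
    ring
  rw [← sub_nonneg, this]
  exact div_nonneg (mul_nonneg (sub_nonneg.2 hxA) (by nlinarith)) hBpos.le

theorem bound_le_bound_left {n B : ℕ} (hB : 0 < B) {A x : ℝ} (hx : 0 ≤ x) (hxA : x ≤ A)
    (h : A * (B + 1) ≤ 2 * (n : ℝ)) : bound n B x ≤ bound n B 0 := by
  have hBpos : (0 : ℝ) < B := by exact_mod_cast hB
  have : bound n B 0 - bound n B x = x * (2 * n - x * (B + 1)) / B := by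
    simp only [bound]
    field_simp
    ring
  rw [← sub_nonneg, this]
  exact div_nonneg (mul_nonneg hx (by nlinarith)) hBpos.le

theorem isGreatest_bound {n B : ℕ} (hB : 0 < B) (hBn : B < n) {A c : ℝ} (hc : c = 0 ∨ 1 ≤ c)
    (hcA : c ≤ A) (hcn : c + B ≤ n) (hmax : ∀ x ∈ Set.Icc 0 A, bound n B x ≤ bound n B c) :
    IsGreatest (objective '' admissible n B A) (bound n B c) := by
  have : NeZero n := ⟨by omega⟩
  obtain ⟨a, ha, hac⟩ := exists_mem_admissible_objective_eq hB hBn hc hcA hcn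
  refine ⟨⟨a, ha, hac⟩, ?_⟩
  rintro _ ⟨a, ha, rfl⟩
  have ha0 : 0 ≤ a 0 := (ha.1 0).elim (·.ge) zero_le_one.trans
  exact (objective_le_bound hB ha).trans (hmax _ ⟨ha0, ha.2.1 0 rfl⟩)

theorem optimization_lemma_general (n B : ℕ) (hB : 0 < B) (hBn : B < n)
    (A : ℝ) (hA1 : 1 ≤ A) (hAB : A + B ≤ (n : ℝ)) :
    (2 * (n : ℝ) ≤ A * (B + 1) →
      IsGreatest
        ((fun a : Fin n → ℝ =>
            (({i : Fin n | (i : ℕ) ≠ 0 ∧ a i ≠ 0}.ncard : ℝ) + ∑ i, (a i) ^ 2)) ''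
          {a : Fin n → ℝ |
            (∀ i, a i = 0 ∨ 1 ≤ a i) ∧
            (∀ i : Fin n, (i : ℕ) = 0 → a i ≤ A) ∧
            (∑ i, a i) = n ∧
            (∀ i : Fin n, (i : ℕ) ≠ 0 →
              (a i = 0 ∨ B ≤ {t : Fin n | (t : ℕ) ≠ 0 ∧ a t = a i}.ncard))})
        ((B : ℝ) + A ^ 2 + ((n : ℝ) - A) ^ 2 / B)) ∧
    (A * (B + 1) ≤ 2 * (n : ℝ) →
      IsGreatest
        ((fun a : Fin n → ℝ =>
            (({i : Fin n | (i : ℕ) ≠ 0 ∧ a i ≠ 0}.ncard : ℝ) + ∑ i, (a i) ^ 2)) ''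
          {a : Fin n → ℝ |
            (∀ i, a i = 0 ∨ 1 ≤ a i) ∧
            (∀ i : Fin n, (i : ℕ) = 0 → a i ≤ A) ∧
            (∑ i, a i) = n ∧
            (∀ i : Fin n, (i : ℕ) ≠ 0 →
              (a i = 0 ∨ B ≤ {t : Fin n | (t : ℕ) ≠ 0 ∧ a t = a i}.ncard))})
        ((B : ℝ) + (n : ℝ) ^ 2 / B)) := by
  refine ⟨fun h => ?_, fun h => ?_⟩
  · exact isGreatest_bound hB hBn (Or.inr hA1) le_rfl hAB fun x hx =>
      bound_le_bound_right hB hx.1 hx.2 h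
  · rw [show (B : ℝ) + n ^ 2 / B = bound n B 0 by simp [bound]]
    exact isGreatest_bound hB hBn (Or.inl rfl) (by linarith) (by simpa using hBn.le) fun x hx =>
      bound_le_bound_left hB hx.1 hx.2 h

/-- Lemma 5.5 (optimization lemma): the maximum of `R(a) + ∑ aᵢ²` over the set `𝒜` of
tuples described in the paper. Indices are `Fin n`, with `a₁` corresponding to index `0`
and "`i ≥ 2`" to indices `i ≠ 0`. -/
theorem optimization_lemma (n B : ℕ) (hB : 0 < B) (hBn : B < n)
    (A : ℝ) (hA1 : 1 ≤ A) (hAn : A < n) (hAB : A + B ≤ (n : ℝ)) :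
    (2 * (n : ℝ) ≤ A * (B + 1) →
      IsGreatest
        ((fun a : Fin n → ℝ =>
            (({i : Fin n | (i : ℕ) ≠ 0 ∧ a i ≠ 0}.ncard : ℝ) + ∑ i, (a i) ^ 2)) ''
          {a : Fin n → ℝ |
            (∀ i, a i = 0 ∨ 1 ≤ a i) ∧
            (∀ i : Fin n, (i : ℕ) = 0 → a i ≤ A) ∧
            (∑ i, a i) = n ∧
            (∀ i : Fin n, (i : ℕ) ≠ 0 →
              (a i = 0 ∨ B ≤ {t : Fin n | (t : ℕ) ≠ 0 ∧ a t = a i}.ncard))})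
        ((B : ℝ) + A ^ 2 + ((n : ℝ) - A) ^ 2 / B)) ∧
    (A * (B + 1) ≤ 2 * (n : ℝ) →
      IsGreatest
        ((fun a : Fin n → ℝ =>
            (({i : Fin n | (i : ℕ) ≠ 0 ∧ a i ≠ 0}.ncard : ℝ) + ∑ i, (a i) ^ 2)) ''
          {a : Fin n → ℝ |
            (∀ i, a i = 0 ∨ 1 ≤ a i) ∧
            (∀ i : Fin n, (i : ℕ) = 0 → a i ≤ A) ∧
            (∑ i, a i) = n ∧
            (∀ i : Fin n, (i : ℕ) ≠ 0 →
              (a i = 0 ∨ B ≤ {t : Fin n | (t : ℕ) ≠ 0 ∧ a t = a i}.ncard))})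
        ((B : ℝ) + (n : ℝ) ^ 2 / B)) :=
  optimization_lemma_general n B hB hBn A hA1 hAB
end

section
/- Let n and B be positive integers with B < n, let A be a real number with 1 ≤ A < n, and assume A + B ≤ n. Let 𝒜 ⊆ ℝⁿ be the set of tuples a = (a₁, …, a_n) such that: for every i, a_i = 0 or a_i ≥ 1; a₁ ≤ A; Σ_{i=1}^n a_i = n; and for each i ≥ 2, either a_i = 0 or the number of indices t ≥ 2 with a_t = a_i is at least B. Then the maximum over a ∈ 𝒜 of Σ_{i=1}^n a_i² is attained and equals A² + (n−A)²/B if A(B+1) ≥ 2n, and equals n²/B if A(B+1) ≤ 2n. -/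
/-!
If the first coordinate is `x`, every nonzero value among the remaining coordinates occurs at
least `B` times among them, so each such coordinate is at most `(n - x) / B` and their squares sum
to at most `(n - x)² / B`. Hence `∑ aᵢ² ≤ f x := x² + (n - x)² / B` with `0 ≤ x ≤ A`. Since `f` is
convex, its maximum on `[0, A]` is `f 0 = n² / B` or `f A`, and `f A - f 0 = A (A (B + 1) - 2n) / B`
decides which. Both values are attained: put `a₁ = x` and `B` further coordinates equal to
`(n - x) / B`.
-/

open Finset

section Fiber

variable {ι R : Type*} [Field R] [LinearOrder R] [IsStrictOrderedRing R]
  {s : Finset ι} {a : ι → R} {B : ℕ}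

theorem mul_le_sum_of_le_card_fiber (ha : ∀ t ∈ s, 0 ≤ a t) {i : ι} (hi : i ∈ s)
    (hB : B ≤ #{t ∈ s | a t = a i}) : B * a i ≤ ∑ t ∈ s, a t :=
  calc (B : R) * a i ≤ #{t ∈ s | a t = a i} * a i := by gcongr; exact ha i hi
    _ = ∑ t ∈ s with a t = a i, a t := by rw [sum_congr rfl fun t ht => (mem_filter.1 ht).2]; simp
    _ ≤ ∑ t ∈ s, a t := sum_le_sum_of_subset_of_nonneg (filter_subset _ _) fun t ht _ => ha t ht

theorem sum_sq_le_sq_sum_div_of_le_card_fiber (hB : 0 < B) (ha : ∀ i ∈ s, 0 ≤ a i)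
    (hfiber : ∀ i ∈ s, a i = 0 ∨ B ≤ #{t ∈ s | a t = a i}) :
    ∑ i ∈ s, a i ^ 2 ≤ (∑ i ∈ s, a i) ^ 2 / B := by
  set S := ∑ i ∈ s, a i
  have hB' : (0 : R) < B := by exact_mod_cast hB
  have hle : ∀ i ∈ s, a i ≤ S / B := fun i hi => by
    rw [le_div_iff₀ hB', mul_comm]
    rcases hfiber i hi with h | h
    · rw [h, mul_zero]; exact sum_nonneg ha
    · exact mul_le_sum_of_le_card_fiber ha hi h
  calc ∑ i ∈ s, a i ^ 2 ≤ ∑ i ∈ s, S / B * a i :=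
        sum_le_sum fun i hi => by rw [sq]; exact mul_le_mul_of_nonneg_right (hle i hi) (ha i hi)
    _ = S ^ 2 / B := by rw [← mul_sum]; ring

end Fiber

noncomputable def profile (n B : ℕ) (x : ℝ) : ℝ := x ^ 2 + ((n : ℝ) - x) ^ 2 / B

theorem convexOn_profile (n B : ℕ) : ConvexOn ℝ Set.univ (profile n B) := by
  have hsq := even_two.convexOn_pow (𝕜 := ℝ)
  have h : ConvexOn ℝ Set.univ fun x : ℝ => x ^ 2 + (B : ℝ)⁻¹ • (-(n : ℝ) + x) ^ 2 :=
    hsq.add ((hsq.translate_right _).smul (by positivity))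
  refine h.congr fun x _ => ?_
  simp only [profile, smul_eq_mul]
  ring

theorem profile_zero (n B : ℕ) : profile n B 0 = (n : ℝ) ^ 2 / B := by
  simp [profile]

theorem profile_sub_profile_zero {n B : ℕ} (hB : 0 < B) (A : ℝ) :
    profile n B A - profile n B 0 = A * (A * (B + 1) - 2 * n) / B := by
  have : (B : ℝ) ≠ 0 := by positivity
  unfold profile
  field_simp
  ring

theorem sum_sq_le_profile {n B : ℕ} (hB : 0 < B) (hn : 0 < n) {A : ℝ} {a : Fin n → ℝ}
    (ha : a ∈ admissible n B A) : ∑ i, a i ^ 2 ≤ profile n B (a ⟨0, hn⟩) := by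
  obtain ⟨hval, -, hsum, hfiber⟩ := ha
  set s : Finset (Fin n) := {i | (i : ℕ) ≠ 0}
  have hs : s = univ.erase ⟨0, hn⟩ := by ext i; simp [s, Fin.ext_iff]
  have hsplit (f : Fin n → ℝ) : ∑ i, f i = f ⟨0, hn⟩ + ∑ i ∈ s, f i := by
    rw [hs, add_sum_erase _ _ (mem_univ _)]
  have hnonneg (i : Fin n) : 0 ≤ a i := (hval i).elim ge_of_eq zero_le_one.trans
  have hfiber' : ∀ i ∈ s, a i = 0 ∨ B ≤ #{t ∈ s | a t = a i} := fun i hi => by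
    convert hfiber i (mem_filter.1 hi).2 using 2
    rw [← Set.ncard_coe_finset]
    congr 1
    ext t
    simp [s]
  have hS : ∑ i ∈ s, a i = n - a ⟨0, hn⟩ := by rw [← hsum, hsplit a]; ring
  rw [hsplit, profile, ← hS]
  gcongr
  exact sum_sq_le_sq_sum_div_of_le_card_fiber hB (fun i _ => hnonneg i) hfiber'

noncomputable def witness (n B : ℕ) (x : ℝ) : Fin n → ℝ :=
  fun i => if (i : ℕ) = 0 then x else if (i : ℕ) ≤ B then ((n : ℝ) - x) / B else 0

theorem sum_comp_witness {n B : ℕ} (hBn : B < n) (x : ℝ) {g : ℝ → ℝ} (hg : g 0 = 0) :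
    ∑ i, g (witness n B x i) = g x + B * g (((n : ℝ) - x) / B) := by
  unfold witness
  rw [Fin.sum_univ_eq_sum_range
      (fun j => g (if j = 0 then x else if j ≤ B then ((n : ℝ) - x) / B else 0)),
    ← sum_range_add_sum_Ico _ hBn, sum_range_succ']
  have htail : ∀ j ∈ Ico (B + 1) n,
      g (if j = 0 then x else if j ≤ B then ((n : ℝ) - x) / B else 0) = 0 := fun j hj => by
    rw [if_neg (by grind), if_neg (by grind), hg]
  have hhead : ∀ j ∈ range B,
      g (if j + 1 = 0 then x else if j + 1 ≤ B then ((n : ℝ) - x) / B else 0)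
        = g (((n : ℝ) - x) / B) := fun j hj => by
    rw [if_neg j.succ_ne_zero, if_pos (Nat.succ_le_of_lt (mem_range.1 hj))]
  simp only [sum_congr rfl hhead, sum_eq_zero htail]
  simp [add_comm]

theorem witness_mem_admissible {n B : ℕ} (hB : 0 < B) (hBn : B < n) {A x : ℝ}
    (hx : x = 0 ∨ 1 ≤ x) (hxA : x ≤ A) (hxB : x + B ≤ n) : witness n B x ∈ admissible n B A := by
  have hB' : (0 : ℝ) < B := by exact_mod_cast hB
  have hc : 1 ≤ ((n : ℝ) - x) / B := by rw [le_div_iff₀ hB']; linarith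
  refine ⟨fun i => ?_, fun i hi => by simp [witness, hi, hxA], ?_, fun i hi => ?_⟩
  · unfold witness; split_ifs <;> simp [*]
  · rw [show ∑ i, witness n B x i = _ from sum_comp_witness hBn x (g := id) rfl, id, id]
    field_simp
    ring
  · by_cases hiB : (i : ℕ) ≤ B
    · right
      let e : Fin B → Fin n := fun j => Fin.castLE hBn j.succ
      have he : Function.Injective e := (Fin.castLE_injective hBn).comp (Fin.succ_injective _)
      calc B = (Set.range e).ncard := by simp [Set.ncard_range_of_injective he]
        _ ≤ _ := Set.ncard_le_ncard ?_ (Set.toFinite _)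
      rintro _ ⟨j, rfl⟩
      simp [e, witness, hi, hiB]
    · simp [witness, hi, hiB]

theorem sum_sq_witness {n B : ℕ} (hBn : B < n) (x : ℝ) :
    ∑ i, witness n B x i ^ 2 = profile n B x := by
  rw [sum_comp_witness hBn x (g := (· ^ 2)) (zero_pow two_ne_zero), profile]
  rcases B.eq_zero_or_pos with rfl | hB
  · simp
  · field_simp

theorem isGreatest_profile {n B : ℕ} (hB : 0 < B) (hBn : B < n) {A x : ℝ}
    (hx : x = 0 ∨ 1 ≤ x) (hxA : x ≤ A) (hxB : x + B ≤ n)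
    (h0 : profile n B 0 ≤ profile n B x) (hA : profile n B A ≤ profile n B x) :
    IsGreatest ((fun a : Fin n → ℝ => ∑ i, a i ^ 2) '' admissible n B A) (profile n B x) := by
  refine ⟨⟨witness n B x, witness_mem_admissible hB hBn hx hxA hxB, sum_sq_witness hBn x⟩, ?_⟩
  rintro _ ⟨a, ha, rfl⟩
  have hn : 0 < n := hB.trans hBn
  have ha0 : a ⟨0, hn⟩ ∈ Set.Icc 0 A :=
    ⟨(ha.1 _).elim ge_of_eq zero_le_one.trans, ha.2.1 _ rfl⟩
  calc ∑ i, a i ^ 2 ≤ profile n B (a ⟨0, hn⟩) := sum_sq_le_profile hB hn ha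
    _ ≤ max (profile n B 0) (profile n B A) :=
      (convexOn_profile n B).le_max_of_mem_Icc trivial trivial ha0
    _ ≤ profile n B x := max_le h0 hA

theorem optimization_lemma_easier_general (n B : ℕ) (hB : 0 < B) (hBn : B < n)
    (A : ℝ) (hA1 : 1 ≤ A) (hAB : A + B ≤ (n : ℝ)) :
    (2 * (n : ℝ) ≤ A * (B + 1) →
      IsGreatest
        ((fun a : Fin n → ℝ => ∑ i, (a i) ^ 2) ''
          {a : Fin n → ℝ |
            (∀ i, a i = 0 ∨ 1 ≤ a i) ∧
            (∀ i : Fin n, (i : ℕ) = 0 → a i ≤ A) ∧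
            (∑ i, a i) = n ∧
            (∀ i : Fin n, (i : ℕ) ≠ 0 →
              (a i = 0 ∨ B ≤ {t : Fin n | (t : ℕ) ≠ 0 ∧ a t = a i}.ncard))})
        (A ^ 2 + ((n : ℝ) - A) ^ 2 / B)) ∧
    (A * (B + 1) ≤ 2 * (n : ℝ) →
      IsGreatest
        ((fun a : Fin n → ℝ => ∑ i, (a i) ^ 2) ''
          {a : Fin n → ℝ |
            (∀ i, a i = 0 ∨ 1 ≤ a i) ∧
            (∀ i : Fin n, (i : ℕ) = 0 → a i ≤ A) ∧
            (∑ i, a i) = n ∧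
            (∀ i : Fin n, (i : ℕ) ≠ 0 →
              (a i = 0 ∨ B ≤ {t : Fin n | (t : ℕ) ≠ 0 ∧ a t = a i}.ncard))})
        ((n : ℝ) ^ 2 / B)) := by
  have hA0 : 0 ≤ A := zero_le_one.trans hA1
  have hB' : (0 : ℝ) < B := by exact_mod_cast hB
  have hdiff := profile_sub_profile_zero (n := n) hB A
  refine ⟨fun hc => ?_, fun hc => ?_⟩
  · have h0 : profile n B 0 ≤ profile n B A := by
      rw [← sub_nonneg, hdiff]
      exact div_nonneg (mul_nonneg hA0 (by linarith)) hB'.le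
    exact isGreatest_profile hB hBn (Or.inr hA1) le_rfl hAB h0 le_rfl
  · have hA : profile n B A ≤ profile n B 0 := by
      rw [← sub_nonpos, hdiff]
      exact div_nonpos_of_nonpos_of_nonneg (mul_nonpos_of_nonneg_of_nonpos hA0 (by linarith)) hB'.le
    rw [← profile_zero]
    exact isGreatest_profile hB hBn (Or.inl rfl) hA0 (by simpa using hBn.le) le_rfl hA

/-- Lemma 5.6 (optimization lemma, simpler form): the maximum of `∑ aᵢ²` over the set `𝒜`
of tuples described in the paper. Indices are `Fin n`, with `a₁` corresponding to index
`0` and "`i ≥ 2`" to indices `i ≠ 0`. -/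
theorem optimization_lemma_easier (n B : ℕ) (hB : 0 < B) (hBn : B < n)
    (A : ℝ) (hA1 : 1 ≤ A) (hAn : A < n) (hAB : A + B ≤ (n : ℝ)) :
    (2 * (n : ℝ) ≤ A * (B + 1) →
      IsGreatest
        ((fun a : Fin n → ℝ => ∑ i, (a i) ^ 2) ''
          {a : Fin n → ℝ |
            (∀ i, a i = 0 ∨ 1 ≤ a i) ∧
            (∀ i : Fin n, (i : ℕ) = 0 → a i ≤ A) ∧
            (∑ i, a i) = n ∧
            (∀ i : Fin n, (i : ℕ) ≠ 0 →
              (a i = 0 ∨ B ≤ {t : Fin n | (t : ℕ) ≠ 0 ∧ a t = a i}.ncard))})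
        (A ^ 2 + ((n : ℝ) - A) ^ 2 / B)) ∧
    (A * (B + 1) ≤ 2 * (n : ℝ) →
      IsGreatest
        ((fun a : Fin n → ℝ => ∑ i, (a i) ^ 2) ''
          {a : Fin n → ℝ |
            (∀ i, a i = 0 ∨ 1 ≤ a i) ∧
            (∀ i : Fin n, (i : ℕ) = 0 → a i ≤ A) ∧
            (∑ i, a i) = n ∧
            (∀ i : Fin n, (i : ℕ) ≠ 0 →
              (a i = 0 ∨ B ≤ {t : Fin n | (t : ℕ) ≠ 0 ∧ a t = a i}.ncard))})
        ((n : ℝ) ^ 2 / B)) :=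
  optimization_lemma_easier_general n B hB hBn A hA1 hAB
end

section
/- Let B ≥ 2, C ≥ 0 and n ≥ 1 be integers with B ≤ n and C ≤ n. Let a₁ ≥ a₂ ≥ … ≥ a_n ≥ 0 be integers with Σ_{i=1}^n a_i = n, and suppose there exists a subset I of {1, …, n} such that Σ_{i∈I} a_i ≤ C and a_j ≥ B for every j ∉ I. Define the transpose partition by a′_i = #{ j ∈ {1,…,n} : a_j ≥ i } for 1 ≤ i ≤ n. Then B · Σ_{i=1}^n (a′_i)² ≤ n² + C²·(B − 1). -/
/-- Lemma 5.8: if `a₁ ≥ … ≥ a_n` is a partition of `n` such that the parts indexed by a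
set `I` sum to at most `C` and all other parts are at least `B`, then the transpose
partition `a′` satisfies `B · ∑ (a′ᵢ)² ≤ n² + C²(B − 1)`. -/
theorem transpose_partition_bound (n B C : ℕ) (hB : 2 ≤ B) (hn : 1 ≤ n)
    (hBn : B ≤ n) (hCn : C ≤ n)
    (a : Fin n → ℕ) (hmono : ∀ i j : Fin n, i ≤ j → a j ≤ a i)
    (hsum : ∑ i, a i = n)
    (I : Finset (Fin n)) (hI : ∑ i ∈ I, a i ≤ C) (hIc : ∀ j ∉ I, B ≤ a j) :
    B * ∑ i : Fin n,
        ((Finset.univ.filter (fun j : Fin n => (i : ℕ) + 1 ≤ a j)).card) ^ 2 ≤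
      n ^ 2 + C ^ 2 * (B - 1) := by
  classical
  have han : ∀ j : Fin n, a j ≤ n := by
    intro j
    calc a j ≤ ∑ i, a i := Finset.single_le_sum (fun i _ => Nat.zero_le _) (Finset.mem_univ j)
    _ = n := hsum
  -- counting lemma : number of i : Fin n with i+1 ≤ m equals m when m ≤ n
  have hcount : ∀ m : ℕ, m ≤ n →
      (∑ i : Fin n, if (i : ℕ) + 1 ≤ m then 1 else 0) = m := by
    intro m hm
    rw [Fin.sum_univ_eq_sum_range (fun i => if i + 1 ≤ m then 1 else 0) n]
    rw [← Finset.card_filter]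
    have : (Finset.range n).filter (fun i => i + 1 ≤ m) = Finset.range m := by
      ext x
      simp only [Finset.mem_filter, Finset.mem_range]
      omega
    rw [this, Finset.card_range]
  -- step 1 : the sum of squares equals a double sum of minima
  have step1 : ∑ i : Fin n,
      ((Finset.univ.filter (fun j : Fin n => (i : ℕ) + 1 ≤ a j)).card) ^ 2
      = ∑ j : Fin n, ∑ k : Fin n, min (a j) (a k) := by
    have h1 : ∀ i : Fin n,
        ((Finset.univ.filter (fun j : Fin n => (i : ℕ) + 1 ≤ a j)).card) ^ 2
        = ∑ j : Fin n, ∑ k : Fin n,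
            (if (i : ℕ) + 1 ≤ min (a j) (a k) then 1 else 0) := by
      intro i
      rw [sq, Finset.card_filter, Finset.sum_mul_sum]
      refine Finset.sum_congr rfl fun j _ => Finset.sum_congr rfl fun k _ => ?_
      have : (i : ℕ) + 1 ≤ min (a j) (a k) ↔ ((i : ℕ) + 1 ≤ a j ∧ (i : ℕ) + 1 ≤ a k) :=
        le_min_iff
      split_ifs with h1 h2 h3 <;> simp_all
    calc ∑ i : Fin n, ((Finset.univ.filter (fun j : Fin n => (i : ℕ) + 1 ≤ a j)).card) ^ 2
        = ∑ i : Fin n, ∑ j : Fin n, ∑ k : Fin n,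
            (if (i : ℕ) + 1 ≤ min (a j) (a k) then 1 else 0) :=
          Finset.sum_congr rfl fun i _ => h1 i
      _ = ∑ j : Fin n, ∑ i : Fin n, ∑ k : Fin n,
            (if (i : ℕ) + 1 ≤ min (a j) (a k) then 1 else 0) := Finset.sum_comm
      _ = ∑ j : Fin n, ∑ k : Fin n, ∑ i : Fin n,
            (if (i : ℕ) + 1 ≤ min (a j) (a k) then 1 else 0) :=
          Finset.sum_congr rfl fun j _ => Finset.sum_comm
      _ = ∑ j : Fin n, ∑ k : Fin n, min (a j) (a k) := by
          refine Finset.sum_congr rfl fun j _ => Finset.sum_congr rfl fun k _ => ?_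
          exact hcount _ (le_trans (min_le_left _ _) (han j))
  -- pointwise bound
  have pointwise : ∀ j k : Fin n,
      B * min (a j) (a k) ≤ a j * a k +
        (if j ∈ I ∧ k ∈ I then (B - 1) * (a j * a k) else 0) := by
    intro j k
    by_cases hj : j ∈ I
    · by_cases hk : k ∈ I
      · simp only [hj, hk, and_self, if_true]
        have hmin : min (a j) (a k) ≤ a j * a k := by
          rcases Nat.eq_zero_or_pos (a k) with h | h
          · simp [h]
          · calc min (a j) (a k) ≤ a j := min_le_left _ _
              _ ≤ a j * a k := Nat.le_mul_of_pos_right _ h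
        have hB1 : B - 1 + 1 = B := by omega
        calc B * min (a j) (a k) = (B - 1) * min (a j) (a k) + min (a j) (a k) := by
              conv_lhs => rw [← hB1]
              rw [Nat.succ_mul]
          _ ≤ (B - 1) * (a j * a k) + a j * a k :=
              Nat.add_le_add (Nat.mul_le_mul_left _ hmin) hmin
          _ = a j * a k + (B - 1) * (a j * a k) := Nat.add_comm _ _
      · have hBk : B ≤ a k := hIc k hk
        calc B * min (a j) (a k) ≤ B * a j := Nat.mul_le_mul_left _ (min_le_left _ _)
          _ = a j * B := Nat.mul_comm _ _
          _ ≤ a j * a k := Nat.mul_le_mul_left _ hBk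
          _ ≤ _ := Nat.le_add_right _ _
    · have hBj : B ≤ a j := hIc j hj
      calc B * min (a j) (a k) ≤ B * a k := Nat.mul_le_mul_left _ (min_le_right _ _)
        _ ≤ a j * a k := Nat.mul_le_mul_right _ hBj
        _ ≤ _ := Nat.le_add_right _ _
  -- sum the RHS of the pointwise bound
  have hRHS : ∑ j : Fin n, ∑ k : Fin n,
      (a j * a k + (if j ∈ I ∧ k ∈ I then (B - 1) * (a j * a k) else 0))
      = n ^ 2 + (B - 1) * (∑ i ∈ I, a i) ^ 2 := by
    rw [Finset.sum_congr rfl (fun j _ => Finset.sum_add_distrib), Finset.sum_add_distrib]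
    congr 1
    · rw [← Finset.sum_mul_sum, hsum, sq]
    · have hsplit : ∀ j : Fin n, ∑ k : Fin n,
          (if j ∈ I ∧ k ∈ I then (B - 1) * (a j * a k) else 0)
          = if j ∈ I then (B - 1) * (a j * ∑ k ∈ I, a k) else 0 := by
        intro j
        by_cases hj : j ∈ I
        · simp only [hj, true_and, if_true]
          rw [Finset.mul_sum, Finset.mul_sum]
          rw [← Finset.sum_filter]
          congr 1
          simp [Finset.filter_mem_eq_inter]
        · simp [hj]
      rw [Finset.sum_congr rfl (fun j _ => hsplit j), ← Finset.sum_filter]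
      have : Finset.univ.filter (fun j : Fin n => j ∈ I) = I := by
        simp [Finset.filter_mem_eq_inter]
      rw [this, ← Finset.mul_sum, ← Finset.sum_mul, sq]
  -- combine
  rw [step1, Finset.mul_sum]
  have : ∑ j : Fin n, B * ∑ k : Fin n, min (a j) (a k)
      = ∑ j : Fin n, ∑ k : Fin n, B * min (a j) (a k) :=
    Finset.sum_congr rfl fun j _ => Finset.mul_sum _ _ _
  rw [this]
  calc ∑ j : Fin n, ∑ k : Fin n, B * min (a j) (a k)
      ≤ ∑ j : Fin n, ∑ k : Fin n,
          (a j * a k + (if j ∈ I ∧ k ∈ I then (B - 1) * (a j * a k) else 0)) :=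
        Finset.sum_le_sum fun j _ => Finset.sum_le_sum fun k _ => pointwise j k
    _ = n ^ 2 + (B - 1) * (∑ i ∈ I, a i) ^ 2 := hRHS
    _ ≤ n ^ 2 + C ^ 2 * (B - 1) := by
        have : (∑ i ∈ I, a i) ^ 2 ≤ C ^ 2 := Nat.pow_le_pow_left hI 2
        calc n ^ 2 + (B - 1) * (∑ i ∈ I, a i) ^ 2
            ≤ n ^ 2 + (B - 1) * C ^ 2 := Nat.add_le_add_left (Nat.mul_le_mul_left _ this) _
          _ = n ^ 2 + C ^ 2 * (B - 1) := by rw [Nat.mul_comm]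
end

section
/- Let F be a finite field with |F| = q. (a) For every integer n ≥ 1: 9·q^(n²) < 32·|GL_n(F)| and |GL_n(F)| < q^(n²). (b) For every integer n ≥ 2: 9·q^(n²−1) < 16·|SL_n(F)| and |SL_n(F)| < q^(n²−1). -/
/-!
Over a field with `q` elements, counting bases gives
`|GL_n| = q^{n²} ∏_{j=1}^{n} (1 - q^{-j})`, and `det : GL_n → Fˣ` is onto with kernel `SL_n`, so
`|SL_n| = q^{n²-1} ∏_{j=2}^{n} (1 - q^{-j})`. The products are `< 1`. For the lower bounds put
`r = 1/q ≤ 1/2`: by `∏ (1 - a_j) ≥ 1 - ∑ a_j` and the geometric series,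
`∏_{j≥3} (1 - r^j) > 1 - 2r³ ≥ 3/4`, which together with `1 - r² ≥ 3/4` gives `9/16`;
the factor `1 - r ≥ 1/2` then gives `9/32`.
-/

open Finset

section OrderedField

variable {K : Type*} [Field K] [LinearOrder K] [IsStrictOrderedRing K]

theorem one_sub_sum_le_prod_one_sub {ι : Type*} (s : Finset ι) {a : ι → K}
    (h0 : ∀ i ∈ s, 0 ≤ a i) (h1 : ∀ i ∈ s, a i ≤ 1) :
    1 - ∑ i ∈ s, a i ≤ ∏ i ∈ s, (1 - a i) := by
  classical
  induction s using Finset.induction_on with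
  | empty => simp
  | insert i s hi ih =>
    rw [sum_insert hi, prod_insert hi]
    have hs : 0 ≤ ∑ j ∈ s, a j := sum_nonneg fun j hj ↦ h0 j (mem_insert_of_mem hj)
    have hai := h0 i (mem_insert_self i s)
    have hai_le := h1 i (mem_insert_self i s)
    have ih := ih (fun j hj ↦ h0 j (mem_insert_of_mem hj)) (fun j hj ↦ h1 j (mem_insert_of_mem hj))
    nlinarith [mul_le_mul_of_nonneg_left ih (sub_nonneg.2 hai_le)]

theorem prod_one_sub_pow_lt_one {r : K} (hr0 : 0 < r) (hr1 : r < 1) (k : ℕ) {n : ℕ}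
    (hn : n ≠ 0) : ∏ j ∈ range n, (1 - r ^ (j + k)) < 1 := by
  obtain ⟨m, rfl⟩ := Nat.exists_eq_succ_of_ne_zero hn
  have hpow : ∀ i, 0 ≤ 1 - r ^ i := fun i ↦ sub_nonneg.2 (pow_le_one₀ hr0.le hr1.le)
  rw [prod_range_succ]
  exact mul_lt_one_of_nonneg_of_lt_one_right
    (prod_le_one (fun i _ ↦ hpow _) fun i _ ↦ sub_le_self _ (pow_nonneg hr0.le _))
    (hpow _) (sub_lt_self _ (pow_pos hr0 _))

theorem nine_div_sixteen_lt_prod_one_sub_pow {r : K} (hr0 : 0 < r) (hr : r ≤ 1 / 2) (n : ℕ) :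
    9 / 16 < ∏ j ∈ range n, (1 - r ^ (j + 2)) := by
  cases n with
  | zero => norm_num
  | succ m =>
    rw [prod_range_succ']
    have hgeom : ∑ j ∈ range m, r ^ j < 2 := by
      have hS : 0 ≤ ∑ j ∈ range m, r ^ j := sum_nonneg fun j _ ↦ pow_nonneg hr0.le j
      nlinarith [mul_neg_geom_sum r m, pow_pos hr0 m]
    have htail : ∑ j ∈ range m, r ^ (j + 3) < 1 / 4 :=
      calc ∑ j ∈ range m, r ^ (j + 3) = r ^ 3 * ∑ j ∈ range m, r ^ j := by
            rw [mul_sum]; simp only [pow_add, mul_comm]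
        _ < r ^ 3 * 2 := mul_lt_mul_of_pos_left hgeom (pow_pos hr0 3)
        _ ≤ 1 / 4 := by nlinarith [pow_le_pow_left₀ hr0.le hr 3]
    have hprod := one_sub_sum_le_prod_one_sub (range m) (a := fun j ↦ r ^ (j + 3))
      (fun j _ ↦ pow_nonneg hr0.le _) (fun j _ ↦ pow_le_one₀ hr0.le (by linarith))
    have hfirst : 3 / 4 ≤ 1 - r ^ (0 + 2) := by nlinarith
    simp only [add_assoc, Nat.reduceAdd] at hprod ⊢
    nlinarith

theorem nine_div_thirtyTwo_lt_prod_one_sub_pow {r : K} (hr0 : 0 < r) (hr : r ≤ 1 / 2) (n : ℕ) :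
    9 / 32 < ∏ j ∈ range n, (1 - r ^ (j + 1)) := by
  cases n with
  | zero => norm_num
  | succ m =>
    rw [prod_range_succ']
    have h := nine_div_sixteen_lt_prod_one_sub_pow hr0 hr m
    simp only [add_assoc, Nat.reduceAdd, zero_add, pow_one]
    nlinarith

end OrderedField

namespace Matrix

theorem card_GL_eq_card_units_mul_card_SL {ι R : Type*} [Fintype ι] [DecidableEq ι] [Nonempty ι]
    [CommRing R] : Nat.card (GL ι R) = Nat.card Rˣ * Nat.card (SpecialLinearGroup ι R) := by
  let det : GL ι R →* Rˣ := GeneralLinearGroup.det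
  let SLEquivKer : SpecialLinearGroup ι R ≃ det.ker :=
    { toFun A := ⟨A, SpecialLinearGroup.coeToGL_det A⟩
      invFun B := ⟨B.1, congrArg Units.val B.2⟩
      left_inv _ := rfl
      right_inv _ := Subtype.ext (Units.ext rfl) }
  rw [det.ker.card_eq_card_quotient_mul_card_subgroup, Nat.card_congr SLEquivKer,
    Nat.card_congr (QuotientGroup.quotientKerEquivOfSurjective det
      GeneralLinearGroup.det_surjective).toEquiv]

theorem card_GL_fin_eq_pow_mul_prod (F : Type*) [Field F] [Fintype F] (n : ℕ) :
    (Nat.card (GL (Fin n) F) : ℝ) =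
      (Fintype.card F : ℝ) ^ (n ^ 2) * ∏ j ∈ range n, (1 - (Fintype.card F : ℝ)⁻¹ ^ (j + 1)) := by
  set q := Fintype.card F
  have hq : (q : ℝ) ≠ 0 := by exact_mod_cast Fintype.card_ne_zero
  -- the exponent `n - i` is written so that `prod_range_reflect` applies
  have hterm : ∀ i ∈ range n,
      ((q ^ n - q ^ i : ℕ) : ℝ) = q ^ n * (1 - (q : ℝ)⁻¹ ^ (n - 1 - i + 1)) := by
    intro i hi
    have hin : i + (n - 1 - i + 1) = n := by have := mem_range.1 hi; omega
    generalize n - 1 - i + 1 = k at hin ⊢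
    subst hin
    rw [Nat.cast_sub (Nat.pow_le_pow_right Fintype.card_pos (Nat.le_add_right i k))]
    push_cast
    rw [mul_one_sub, pow_add, inv_pow, mul_inv_cancel_right₀ (pow_ne_zero _ hq)]
  rw [card_GL_field, Fin.prod_univ_eq_prod_range (fun i ↦ q ^ n - q ^ i), Nat.cast_prod,
    prod_congr rfl hterm, prod_mul_distrib, prod_const, card_range, ← pow_mul, sq,
    prod_range_reflect (fun j ↦ 1 - (q : ℝ)⁻¹ ^ (j + 1))]

theorem card_SL_fin_succ_eq_pow_mul_prod (F : Type*) [Field F] [Fintype F] (n : ℕ) :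
    (Nat.card (SpecialLinearGroup (Fin (n + 1)) F) : ℝ) =
      (Fintype.card F : ℝ) ^ ((n + 1) ^ 2 - 1) *
        ∏ j ∈ range n, (1 - (Fintype.card F : ℝ)⁻¹ ^ (j + 2)) := by
  have hGL := card_GL_fin_eq_pow_mul_prod F (n + 1)
  set q := Fintype.card F
  have hq : (1 : ℝ) < q := by exact_mod_cast Fintype.one_lt_card
  rw [card_GL_eq_card_units_mul_card_SL, Nat.card_units, Nat.card_eq_fintype_card,
    Nat.cast_mul, Nat.cast_sub Fintype.card_pos, Nat.cast_one, prod_range_succ'] at hGL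
  have hpow : (q : ℝ) ^ ((n + 1) ^ 2) = q ^ ((n + 1) ^ 2 - 1) * q :=
    (pow_sub_one_mul (by positivity) _).symm
  refine mul_left_cancel₀ (sub_ne_zero.2 hq.ne') (hGL.trans ?_)
  rw [hpow, zero_add, pow_one]
  field_simp

end Matrix

/-- Lemma 5.11 (order estimates for linear groups): for a finite field `F` with `q`
elements, `9·q^{n²}/32 < |GL_n(F)| < q^{n²}` for `n ≥ 1`, and
`9·q^{n²−1}/16 < |SL_n(F)| < q^{n²−1}` for `n ≥ 2`. -/
theorem order_linear_groups {F : Type*} [Field F] [Fintype F] (q : ℕ)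
    (hq : Fintype.card F = q) :
    (∀ n : ℕ, 1 ≤ n →
      9 * q ^ (n ^ 2) < 32 * Nat.card (Matrix.GeneralLinearGroup (Fin n) F) ∧
        Nat.card (Matrix.GeneralLinearGroup (Fin n) F) < q ^ (n ^ 2)) ∧
    (∀ n : ℕ, 2 ≤ n →
      9 * q ^ (n ^ 2 - 1) < 16 * Nat.card (Matrix.SpecialLinearGroup (Fin n) F) ∧
        Nat.card (Matrix.SpecialLinearGroup (Fin n) F) < q ^ (n ^ 2 - 1)) := by
  subst hq
  have hq : (2 : ℝ) ≤ Fintype.card F := by exact_mod_cast Fintype.one_lt_card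
  have hr0 : (0 : ℝ) < (Fintype.card F : ℝ)⁻¹ := by positivity
  have hr : (Fintype.card F : ℝ)⁻¹ ≤ 1 / 2 := by
    rw [one_div]; exact inv_anti₀ two_pos hq
  have hr1 : (Fintype.card F : ℝ)⁻¹ < 1 := by linarith
  refine ⟨fun n hn ↦ ?_, fun n hn ↦ ?_⟩
  · have hlower := nine_div_thirtyTwo_lt_prod_one_sub_pow hr0 hr n
    have hupper := prod_one_sub_pow_lt_one hr0 hr1 1 (n := n) (by omega)
    have hpow : (0 : ℝ) < (Fintype.card F : ℝ) ^ (n ^ 2) := by positivity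
    have hcard := Matrix.card_GL_fin_eq_pow_mul_prod F n
    constructor <;> (rw [← Nat.cast_lt (α := ℝ)]; push_cast; rw [hcard]; nlinarith)
  · obtain ⟨m, rfl⟩ : ∃ m, n = m + 1 := ⟨n - 1, by omega⟩
    have hlower := nine_div_sixteen_lt_prod_one_sub_pow hr0 hr m
    have hupper := prod_one_sub_pow_lt_one hr0 hr1 2 (n := m) (by omega)
    have hpow : (0 : ℝ) < (Fintype.card F : ℝ) ^ ((m + 1) ^ 2 - 1) := by positivity
    have hcard := Matrix.card_SL_fin_succ_eq_pow_mul_prod F m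
    constructor <;> (rw [← Nat.cast_lt (α := ℝ)]; push_cast; rw [hcard]; nlinarith)
end

section
/- Let K be a field, V a finite-dimensional K-vector space, t ≥ 1 an integer, and let V₁, …, V_t be subspaces of V forming an internal direct sum decomposition V = V₁ ⊕ … ⊕ V_t with dim V_i = m for every i. Let g be a linear automorphism of V such that g(V_i) = V_{i+1} for 1 ≤ i < t and g(V_t) = V₁. Then g^t maps V₁ to itself, and if g′ denotes the restriction of g^t to V₁, then det(g) = (−1)^(m·(t−1)) · det(g′). -/
/-!
Put `U = W 0`. Since `g ^ j` maps `U` isomorphically onto `W j`, the map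
`(u_j)_j ↦ ∑_j g ^ j u_j` is an isomorphism `U ^ t ≃ V`, and it transports `g` to the block
cyclic shift `(u_0, …, u_{t-1}) ↦ (g′ u_{t-1}, u_0, …, u_{t-2})`. That shift is
`diag(g′, 1, …, 1)` composed with the permutation of the `t` blocks by a `t`-cycle, whose
determinant on blocks of dimension `m` is `sign(t-cycle) ^ m = (-1) ^ (m (t - 1))`.
-/

open Module

section CyclicShift

variable {R M : Type*} [CommRing R] [AddCommGroup M] [Module R M]

theorem LinearMap.det_funLeft_perm [Nontrivial R] [Module.Free R M] [Module.Finite R M]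
    {ι : Type*} [Fintype ι] [DecidableEq ι] (σ : Equiv.Perm ι) :
    LinearMap.det (LinearMap.funLeft R M σ) = (Equiv.Perm.sign σ : R) ^ finrank R M := by
  classical
  let κ := Free.ChooseBasisIndex R M
  let B := (Pi.basis fun _ : ι => Free.chooseBasis R M).reindex (Equiv.sigmaEquivProd ι κ)
  have hB : LinearMap.toMatrix B B (LinearMap.funLeft R M σ) =
      (1 : Matrix (ι × κ) (ι × κ) R).submatrix (Equiv.prodCongrLeft fun _ => σ)
        _root_.id := by
    ext ⟨i, k⟩ ⟨i', k'⟩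
    by_cases h : σ i = i'
    · simp [LinearMap.toMatrix_apply, B, Matrix.one_apply, Finsupp.single_apply, h, eq_comm]
    · simp [LinearMap.toMatrix_apply, B, Matrix.one_apply, h]
  rw [← LinearMap.det_toMatrix B, hB, Matrix.det_permute, Matrix.det_one, mul_one,
    Equiv.Perm.sign_prodCongrLeft, Finset.prod_const, Finset.card_univ,
    finrank_eq_card_chooseBasisIndex]
  push_cast
  rfl

/-- `(cyclicShift n f u) 0 = f (u (last n))` and `(cyclicShift n f u) j.succ = u j.castSucc`. -/
def cyclicShift (n : ℕ) (f : M →ₗ[R] M) : (Fin (n + 1) → M) →ₗ[R] Fin (n + 1) → M :=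
  LinearMap.pi (fun i => Function.update (fun _ => LinearMap.id) 0 f i ∘ₗ LinearMap.proj i)
    ∘ₗ LinearMap.funLeft R M (finRotate (n + 1)).symm

theorem det_cyclicShift [Nontrivial R] [Module.Free R M] [Module.Finite R M] (n : ℕ)
    (f : M →ₗ[R] M) :
    LinearMap.det (cyclicShift n f) = (-1) ^ (finrank R M * n) * LinearMap.det f := by
  rw [cyclicShift, LinearMap.det_comp, LinearMap.det_pi, LinearMap.det_funLeft_perm,
    Equiv.Perm.sign_symm, sign_finRotate, Fin.prod_univ_succ]
  simp [Fin.succ_ne_zero, pow_mul, mul_comm]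

end CyclicShift

section OrbitSum

variable {R V : Type*} [CommRing R] [AddCommGroup V] [Module R V]

open Fin.NatCast in
theorem map_pow_of_map_eq_succ {t : ℕ} [NeZero t] (W : Fin t → Submodule R V)
    (e : V ≃ₗ[R] V) (he : ∀ i : Fin t, (W i).map (e : V →ₗ[R] V) = W (i + 1)) (k : ℕ) :
    (W 0).map ((e ^ k : V ≃ₗ[R] V) : V →ₗ[R] V) = W k := by
  induction k with
  | zero => simp
  | succ k ih =>
    rw [pow_succ', LinearEquiv.coe_toLinearMap_mul, Module.End.mul_eq_comp, Submodule.map_comp,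
      ih, he]
    norm_cast

def orbitSum (e : V ≃ₗ[R] V) (U : Submodule R V) (n : ℕ) : (Fin (n + 1) → U) →ₗ[R] V :=
  ∑ j : Fin (n + 1),
    ((e ^ (j : ℕ) : V ≃ₗ[R] V) : V →ₗ[R] V) ∘ₗ U.subtype ∘ₗ LinearMap.proj j

@[simp]
theorem orbitSum_apply (e : V ≃ₗ[R] V) (U : Submodule R V) (n : ℕ) (u : Fin (n + 1) → U) :
    orbitSum e U n u = ∑ j : Fin (n + 1), (e ^ (j : ℕ)) (u j : V) := by
  simp [orbitSum, LinearMap.sum_apply]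

theorem orbitSum_comp_cyclicShift (e : V ≃ₗ[R] V) (U : Submodule R V) (n : ℕ)
    (hU : ∀ x ∈ U, ((e ^ (n + 1) : V ≃ₗ[R] V) : V →ₗ[R] V) x ∈ U) :
    orbitSum e U n ∘ₗ
        cyclicShift n (((e ^ (n + 1) : V ≃ₗ[R] V) : V →ₗ[R] V).restrict hU) =
      (e : V →ₗ[R] V) ∘ₗ orbitSum e U n := by
  refine LinearMap.ext fun u => ?_
  simp only [LinearMap.comp_apply, orbitSum_apply, map_sum]
  rw [← Equiv.sum_comp (finRotate (n + 1))]
  refine Finset.sum_congr rfl fun i _ => ?_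
  simp only [cyclicShift, LinearMap.comp_apply, LinearMap.pi_apply, LinearMap.proj_apply,
    LinearMap.funLeft_apply, Equiv.symm_apply_apply]
  induction i using Fin.lastCases with
  | last => simp [pow_succ']
  | cast j => simp [pow_succ', Fin.succ_ne_zero]

theorem orbitSum_bijective (e : V ≃ₗ[R] V) {n : ℕ} {W : Fin (n + 1) → Submodule R V}
    (hW : DirectSum.IsInternal W) (U : Submodule R V)
    (hU : ∀ j : Fin (n + 1), U.map ((e ^ (j : ℕ) : V ≃ₗ[R] V) : V →ₗ[R] V) = W j) :
    Function.Bijective (orbitSum e U n) := by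
  classical
  let φ : (Fin (n + 1) → U) ≃ₗ[R] DirectSum (Fin (n + 1)) fun j => W j :=
    LinearEquiv.piCongrRight (fun j => (e ^ (j : ℕ)).submoduleMap U ≪≫ₗ .ofEq _ _ (hU j))
      ≪≫ₗ (DirectSum.linearEquivFunOnFintype R _ _).symm
  have hφ : orbitSum e U n = DirectSum.coeLinearMap W ∘ₗ φ := by
    refine LinearMap.ext fun u => ?_
    rw [LinearMap.comp_apply, LinearEquiv.coe_coe, ← DirectSum.sum_univ_of (φ u), map_sum]
    simp only [DirectSum.coeLinearMap_of, orbitSum_apply]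
    rfl
  rw [hφ]
  exact hW.comp φ.bijective

end OrbitSum

/-- Lemma 6.2: if a linear automorphism `g` of `V` cyclically permutes the summands of a
direct sum decomposition `V = V₁ ⊕ … ⊕ V_t` with all `dim Vᵢ = m`, then `g^t` maps `V₁`
to itself and, denoting by `g′` the restriction of `g^t` to `V₁`,
`det g = (−1)^{m(t−1)} · det g′`. -/
theorem det_of_cyclic_permutation {K V : Type*} [Field K] [AddCommGroup V] [Module K V]
    [FiniteDimensional K V] (t : ℕ) [NeZero t] (m : ℕ)
    (W : Fin t → Submodule K V) (hInt : DirectSum.IsInternal W)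
    (hdim : ∀ i, Module.finrank K (W i) = m)
    (g : V ≃ₗ[K] V)
    (hcyc : ∀ i : Fin t, (W i).map (g : V →ₗ[K] V) = W (i + 1)) :
    (W 0).map ((g ^ t : V ≃ₗ[K] V) : V →ₗ[K] V) = W 0 ∧
    ∃ h : ∀ x ∈ W 0, ((g ^ t : V ≃ₗ[K] V) : V →ₗ[K] V) x ∈ W 0,
      LinearMap.det (g : V →ₗ[K] V) =
        (-1 : K) ^ (m * (t - 1)) *
          LinearMap.det (((g ^ t : V ≃ₗ[K] V) : V →ₗ[K] V).restrict h) := by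
  have hpow := map_pow_of_map_eq_succ W g hcyc
  have hWt : (W 0).map ((g ^ t : V ≃ₗ[K] V) : V →ₗ[K] V) = W 0 := by simpa using hpow t
  have h : ∀ x ∈ W 0, ((g ^ t : V ≃ₗ[K] V) : V →ₗ[K] V) x ∈ W 0 :=
    fun x hx => hWt ▸ Submodule.mem_map_of_mem hx
  refine ⟨hWt, h, ?_⟩
  obtain ⟨n, rfl⟩ := Nat.exists_eq_succ_of_ne_zero (NeZero.ne t)
  let Φ := LinearEquiv.ofBijective _ <|
    orbitSum_bijective g hInt (W 0) fun j => by simpa using hpow j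
  have hconj : (Φ : _ →ₗ[K] V)
      ∘ₗ cyclicShift n (((g ^ (n + 1) : V ≃ₗ[K] V) : V →ₗ[K] V).restrict h)
      ∘ₗ (Φ.symm : V →ₗ[K] _) = g := by
    refine LinearMap.ext fun x => ?_
    obtain ⟨u, rfl⟩ := Φ.surjective x
    simp only [LinearMap.comp_apply, LinearEquiv.coe_coe, LinearEquiv.symm_apply_apply]
    exact LinearMap.congr_fun (orbitSum_comp_cyclicShift g (W 0) n h) u
  rw [← hconj, LinearMap.det_conj, det_cyclicShift, hdim]
  simp
end

section
/- For every natural number m ≥ 16 there exist two distinct primes ℓ and s such that 2ℓ > m, ℓ + 3 ≤ m, 2s > m and s + 3 ≤ m; that is, there are at least two distinct primes in the interval (m/2, m − 3]. -/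
/-!
Erdős's proof of Bertrand's postulate, with room for two exceptional primes. The primes in
`(n, 2n]` contribute at most `2n` each to `centralBinom n`, the primes in `(2n/3, n]` contribute
nothing, and the smaller primes at most `(2n)^√(2n) · 4^(2n/3)`. If `(n, 2n - 3]` held at most one
prime, then `(n, 2n]` would hold at most two (only the odd number `2n - 1` can be a prime in
`(2n - 3, 2n]`), so `4^n < n · centralBinom n ≤ n · (2n)^(√(2n) + 2) · 4^(2n/3)`, which fails for
`n ≥ 648` by a concavity argument. Below that, an explicit chain of pairs of primes covers `m`.
-/

namespace TwoPrimes

section Real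

open Real Set

theorem _root_.ConcaveOn.comp_const_mul_Ioi {f : ℝ → ℝ} {a c : ℝ} (hc : 0 < c)
    (hf : ConcaveOn ℝ (Ioi a) f) : ConcaveOn ℝ (Ioi (a / c)) fun x => f (c * x) := by
  refine (hf.comp_linearMap (c • LinearMap.id)).subset (fun x hx => ?_) (convex_Ioi _)
  simpa [div_lt_iff₀' hc] using hx

noncomputable def logGap (x : ℝ) : ℝ :=
  log x + (√(2 * x) * log (2 * x) + 2 * log (2 * x)) - log 4 / 3 * x

theorem concaveOn_logGap : ConcaveOn ℝ (Ioi (1 / 2)) logGap := by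
  have hlog : ConcaveOn ℝ (Ioi 0) log := strictConcaveOn_log_Ioi.concaveOn
  exact ((hlog.subset (Ioi_subset_Ioi (by norm_num)) (convex_Ioi _)).add
    ((strictConcaveOn_sqrt_mul_log_Ioi.concaveOn.comp_const_mul_Ioi two_pos).add
    (((hlog.comp_const_mul_Ioi two_pos).subset (Ioi_subset_Ioi (by norm_num))
      (convex_Ioi _)).smul zero_le_two))).sub
    ((convexOn_id (convex_Ioi _)).smul (by positivity))

theorem logGap_eq {x : ℝ} (hx : 0 < x) :
    logGap x = log (x * (2 * x) ^ (√(2 * x) + 2) * 4 ^ (2 * x / 3)) - log (4 ^ x) := by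
  rw [log_mul (by positivity) (by positivity), log_mul hx.ne' (by positivity),
    log_rpow (by positivity), log_rpow (by positivity), log_rpow (by positivity), logGap]
  ring

theorem real_main_inequality {x : ℝ} (hx : 648 ≤ x) :
    x * (2 * x) ^ (√(2 * x) + 2) * 4 ^ (2 * x / 3) ≤ 4 ^ x := by
  have h18 : (4 : ℝ) ^ (18 : ℝ) ≤ 18 * (2 * 18) ^ (√(2 * 18) + 2) * 4 ^ (2 * 18 / 3 : ℝ) := by
    norm_num
  have h648 : (648 : ℝ) * (2 * 648) ^ (√(2 * 648) + 2) * 4 ^ (2 * 648 / 3 : ℝ) ≤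
      4 ^ (648 : ℝ) := by
    norm_num
    calc _ ≤ (4 : ℝ) ^ 216 * 4 ^ 432 := by gcongr; norm_num
      _ = 4 ^ 648 := by rw [← pow_add]
  rw [← log_le_log_iff (by positivity) (by positivity), ← sub_nonneg, ← logGap_eq (by norm_num)]
    at h18
  rw [← log_le_log_iff (by positivity) (by positivity), ← sub_nonpos, ← logGap_eq (by norm_num)]
    at h648
  rw [← log_le_log_iff (by positivity) (by positivity), ← sub_nonpos, ← logGap_eq (by linarith)]
  -- `logGap` is concave, nonnegative at 18 and nonpositive at 648, so nonpositive beyond 648.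
  exact (concaveOn_logGap.right_le_of_le_left'' (by norm_num) (by norm_num; linarith)
    (by norm_num) hx (h648.trans h18)).trans h648

end Real

section Nat

open Finset Nat

theorem main_inequality {n : ℕ} (hn : 648 ≤ n) :
    n * (2 * n) ^ (sqrt (2 * n) + 2) * 4 ^ (2 * n / 3) ≤ 4 ^ n := by
  rw [← @cast_le ℝ]
  simp only [cast_mul, cast_pow, cast_add, ← Real.rpow_natCast, cast_ofNat]
  refine le_trans ?_ (real_main_inequality (by exact_mod_cast hn))
  gcongr
  · exact_mod_cast (by omega : 1 ≤ 2 * n)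
  · exact_mod_cast Real.nat_sqrt_le_real_sqrt
  · norm_num
  · exact cast_div_le.trans (by norm_cast)

theorem centralBinom_eq_prod_range_mul_prod_primes {n : ℕ} (hn : 2 < n) :
    centralBinom n = (∏ p ∈ range (2 * n / 3 + 1), p ^ (centralBinom n).factorization p) *
      ∏ p ∈ Ioc n (2 * n) with p.Prime, p ^ (centralBinom n).factorization p := by
  have hdisj : Disjoint (range (2 * n / 3 + 1)) {p ∈ Ioc n (2 * n) | p.Prime} := by
    refine disjoint_left.mpr fun p hsmall hlarge => ?_
    simp only [mem_range, mem_filter, mem_Ioc] at hsmall hlarge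
    omega
  rw [← prod_union hdisj]
  refine ((prod_subset (fun p hp => ?_) (fun p hp hnot => ?_)).trans
    n.prod_pow_factorization_centralBinom).symm
  · simp only [mem_union, mem_range, mem_filter, mem_Ioc] at hp ⊢
    omega
  · simp only [mem_union, mem_range, mem_filter, mem_Ioc, not_or, not_and] at hp hnot
    by_cases hprime : p.Prime
    · have hpn : p ≤ n := by by_contra! h; exact hnot.2 ⟨h, by omega⟩ hprime
      rw [factorization_centralBinom_of_two_mul_self_lt_three_mul hn hpn (by omega), pow_zero]
    · rw [factorization_eq_zero_of_not_prime _ hprime, pow_zero]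

theorem prod_range_pow_factorization_centralBinom_le {n : ℕ} (hn : 0 < n) :
    ∏ p ∈ range (2 * n / 3 + 1), p ^ (centralBinom n).factorization p ≤
      (2 * n) ^ sqrt (2 * n) * 4 ^ (2 * n / 3) := by
  set f := fun p => p ^ (centralBinom n).factorization p
  set S := {p ∈ range (2 * n / 3 + 1) | p.Prime}
  have hS : ∏ p ∈ S, f p = ∏ p ∈ range (2 * n / 3 + 1), f p := by
    refine prod_filter_of_ne fun p _ h => ?_
    contrapose! h
    simp only [f, factorization_eq_zero_of_not_prime _ h, pow_zero]
  rw [← hS, ← prod_filter_mul_prod_filter_not S (· ≤ sqrt (2 * n))]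
  gcongr
  · calc ∏ p ∈ S with p ≤ sqrt (2 * n), f p
        ≤ (2 * n) ^ #{p ∈ S | p ≤ sqrt (2 * n)} :=
          prod_le_pow_card _ _ _ fun p _ => pow_factorization_choose_le (by omega)
      _ ≤ (2 * n) ^ #(Icc 1 (sqrt (2 * n))) := by
          refine pow_right_mono₀ (by omega) (card_le_card fun p hp => ?_)
          simp only [S, mem_filter] at hp
          exact mem_Icc.mpr ⟨hp.1.2.one_lt.le, hp.2⟩
      _ = (2 * n) ^ sqrt (2 * n) := by rw [card_Icc, Nat.add_sub_cancel]
  · calc ∏ p ∈ S with ¬p ≤ sqrt (2 * n), f p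
        ≤ ∏ p ∈ S with ¬p ≤ sqrt (2 * n), p := by
          refine prod_le_prod' fun p hp => ?_
          simp only [S, mem_filter, not_le] at hp
          refine (pow_right_mono₀ hp.1.2.one_lt.le ?_).trans (pow_one p).le
          exact factorization_choose_le_one (sqrt_lt'.mp hp.2)
      _ ≤ primorial (2 * n / 3) :=
          prod_le_prod_of_subset_of_one_le' (filter_subset _ _)
            fun p hp _ => (mem_filter.1 hp).2.one_lt.le
      _ ≤ 4 ^ (2 * n / 3) := primorial_le_four_pow _

theorem centralBinom_le_mul_pow_card_primes {n : ℕ} (hn : 2 < n) :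
    centralBinom n ≤
      (2 * n) ^ sqrt (2 * n) * 4 ^ (2 * n / 3) * (2 * n) ^ #{p ∈ Ioc n (2 * n) | p.Prime} := by
  rw [centralBinom_eq_prod_range_mul_prod_primes hn]
  exact Nat.mul_le_mul (prod_range_pow_factorization_centralBinom_le (by omega))
    (prod_le_pow_card _ _ _ fun p _ => pow_factorization_choose_le (by omega))

theorem exists_two_primes_of_two_lt_card {n : ℕ} (hn : 2 ≤ n)
    (hcard : 2 < #{p ∈ Ioc n (2 * n) | p.Prime}) :
    ∃ p q, p.Prime ∧ q.Prime ∧ p < q ∧ n < p ∧ q + 3 ≤ 2 * n := by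
  by_contra! h
  refine hcard.not_ge ?_
  rw [← card_filter_add_card_filter_not (· + 3 ≤ 2 * n)]
  refine Nat.add_le_add (card_le_one.mpr fun a ha b hb => ?_) (card_le_one.mpr fun a ha b hb => ?_)
  · simp only [mem_filter, mem_Ioc] at ha hb
    by_contra hab
    rcases Nat.lt_or_gt_of_ne hab with hlt | hlt
    · exact (h a b ha.1.2 hb.1.2 hlt ha.1.1.1).not_ge hb.2
    · exact (h b a hb.1.2 ha.1.2 hlt hb.1.1.1).not_ge ha.2
  · simp only [mem_filter, mem_Ioc] at ha hb
    rcases ha.1.2.eq_two_or_odd, hb.1.2.eq_two_or_odd with ⟨ha2 | ha2, hb2 | hb2⟩ <;> omega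

theorem exists_two_primes_of_le {n : ℕ} (hn : 648 ≤ n) :
    ∃ p q, p.Prime ∧ q.Prime ∧ p < q ∧ n < p ∧ q + 3 ≤ 2 * n := by
  refine exists_two_primes_of_two_lt_card (by omega) ?_
  by_contra! hcard
  refine (Nat.four_pow_lt_mul_centralBinom n (by omega)).not_ge ?_
  calc n * centralBinom n
      ≤ n * ((2 * n) ^ sqrt (2 * n) * 4 ^ (2 * n / 3) * (2 * n) ^ 2) := by
        grw [centralBinom_le_mul_pow_card_primes (by omega), hcard]
        omega
    _ = n * (2 * n) ^ (sqrt (2 * n) + 2) * 4 ^ (2 * n / 3) := by ring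
    _ ≤ 4 ^ n := main_inequality hn

theorem exists_two_primes_of_covering (p q : ℕ) {m : ℕ} (hp : p.Prime) (hq : q.Prime)
    (hpq : p < q) (H : m < q + 3 → ∃ p q, p.Prime ∧ q.Prime ∧ p < q ∧ m < 2 * p ∧ q + 3 ≤ m)
    (hm : m < 2 * p) : ∃ p q, p.Prime ∧ q.Prime ∧ p < q ∧ m < 2 * p ∧ q + 3 ≤ m := by
  by_cases hqm : q + 3 ≤ m
  · exact ⟨p, q, hp, hq, hpq, hm, hqm⟩
  · exact H (by omega)

theorem exists_two_primes_of_lt {m : ℕ} (hm : 16 ≤ m) (hm' : m < 1296) :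
    ∃ p q, p.Prime ∧ q.Prime ∧ p < q ∧ m < 2 * p ∧ q + 3 ≤ m := by
  refine exists_two_primes_of_covering 809 811 (by norm_num) (by norm_num) (by norm_num)
    (fun _ => ?_) (by omega)
  refine exists_two_primes_of_covering 409 419 (by norm_num) (by norm_num) (by norm_num)
    (fun _ => ?_) (by omega)
  refine exists_two_primes_of_covering 211 223 (by norm_num) (by norm_num) (by norm_num)
    (fun _ => ?_) (by omega)
  refine exists_two_primes_of_covering 113 127 (by norm_num) (by norm_num) (by norm_num)
    (fun _ => ?_) (by omega)
  refine exists_two_primes_of_covering 67 71 (by norm_num) (by norm_num) (by norm_num)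
    (fun _ => ?_) (by omega)
  refine exists_two_primes_of_covering 37 41 (by norm_num) (by norm_num) (by norm_num)
    (fun _ => ?_) (by omega)
  refine exists_two_primes_of_covering 23 29 (by norm_num) (by norm_num) (by norm_num)
    (fun _ => ?_) (by omega)
  refine exists_two_primes_of_covering 17 19 (by norm_num) (by norm_num) (by norm_num)
    (fun _ => ?_) (by omega)
  exact exists_two_primes_of_covering 11 13 (by norm_num) (by norm_num) (by norm_num)
    (fun _ => by omega) (by omega)

end Nat

end TwoPrimes

/-- Lemma 5.18: for `m ≥ 16` there are at least two distinct primes in the interval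
`(m/2, m − 3]`. -/
theorem two_primes_in_interval (m : ℕ) (hm : 16 ≤ m) :
    ∃ ℓ s : ℕ, ℓ.Prime ∧ s.Prime ∧ ℓ ≠ s ∧
      m < 2 * ℓ ∧ ℓ + 3 ≤ m ∧ m < 2 * s ∧ s + 3 ≤ m := by
  obtain ⟨p, q, hp, hq, hpq, hmp, hqm⟩ :
      ∃ p q, p.Prime ∧ q.Prime ∧ p < q ∧ m < 2 * p ∧ q + 3 ≤ m := by
    rcases lt_or_ge m 1296 with hsmall | hlarge
    · exact TwoPrimes.exists_two_primes_of_lt hm hsmall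
    · obtain ⟨p, q, hp, hq, hpq, hnp, hqn⟩ :=
        TwoPrimes.exists_two_primes_of_le (n := m / 2) (by omega)
      exact ⟨p, q, hp, hq, hpq, by omega, by omega⟩
  exact ⟨p, q, hp, hq, hpq.ne, by omega, by omega, by omega, by omega⟩
end
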